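/- arXiv:2303.08785 — 7 statements merged into one kernel-verified Lean document; each statement's English description precedes it below -/
import Mathlib

section
/- Let f : ℝⁿ → ℝ be a C¹-smooth function and let {x^k} ⊂ ℝⁿ be a sequence such that: (H1) there exists σ > 0 with f(x^k) − f(x^{k+1}) ≥ σ‖∇f(x^k)‖·‖x^{k+1} − x^k‖ for all sufficiently large k; and (H2) for all sufficiently large k, f(x^{k+1}) = f(x^k) implies x^{k+1} = x^k. If x̄ is an accumulation point of {x^k} and f satisfies the KL property at x̄, then x^k → x̄ as k → ∞. -/
open Filter Topology MeasureTheory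

/-- Convergence of iterates under the primary and complementary
descent conditions and the KL property (Proposition 2.3 / Absil et al.). -/
theorem igd_convergence_under_KL {n : ℕ}
    (f : EuclideanSpace ℝ (Fin n) → ℝ) (hf : ContDiff ℝ 1 f)
    (x : ℕ → EuclideanSpace ℝ (Fin n)) (σ : ℝ) (hσ : 0 < σ)
    (H1 : ∀ᶠ k in atTop,
      σ * ‖gradient f (x k)‖ * ‖x (k + 1) - x k‖ ≤ f (x k) - f (x (k + 1)))
    (H2 : ∀ᶠ k in atTop, f (x (k + 1)) = f (x k) → x (k + 1) = x k)
    (xbar : EuclideanSpace ℝ (Fin n))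
    (hacc : ∃ φ : ℕ → ℕ, StrictMono φ ∧ Tendsto (fun k => x (φ k)) atTop (𝓝 xbar))
    (hKL : ∃ η > (0 : ℝ), ∃ U ∈ 𝓝 xbar, ∃ ψ : ℝ → ℝ,
      MonotoneOn ψ (Set.Ioo 0 η) ∧ (∀ t ∈ Set.Ioo (0 : ℝ) η, 0 < ψ t) ∧
      IntegrableOn (fun t => 1 / ψ t) (Set.Ioo 0 η) ∧
      ∀ y ∈ U, f xbar < f y → f y < f xbar + η → ψ (f y - f xbar) ≤ ‖gradient f y‖) :
    Tendsto x atTop (𝓝 xbar) := by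
  obtain ⟨φ, hφmono, hφtend⟩ := hacc
  obtain ⟨η, hη, U, hU, ψ, hψmono, hψpos, hψint, hKLineq⟩ := hKL
  rw [eventually_atTop] at H1 H2
  obtain ⟨N₁, hH1⟩ := H1
  obtain ⟨N₂, hH2⟩ := H2
  set N₀ := max N₁ N₂ with hN₀def
  have hH1' : ∀ k, N₀ ≤ k →
      σ * ‖gradient f (x k)‖ * ‖x (k + 1) - x k‖ ≤ f (x k) - f (x (k + 1)) :=
    fun k hk => hH1 k (le_trans (le_max_left _ _) hk)
  have hH2' : ∀ k, N₀ ≤ k → (f (x (k + 1)) = f (x k) → x (k + 1) = x k) :=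
    fun k hk => hH2 k (le_trans (le_max_right _ _) hk)
  have hdec : ∀ k, N₀ ≤ k → f (x (k + 1)) ≤ f (x k) := by
    intro k hk
    have h := hH1' k hk
    nlinarith [norm_nonneg (gradient f (x k)), norm_nonneg (x (k + 1) - x k),
      mul_nonneg (mul_nonneg hσ.le (norm_nonneg (gradient f (x k))))
        (norm_nonneg (x (k + 1) - x k))]
  have hdec' : ∀ k l, N₀ ≤ k → k ≤ l → f (x l) ≤ f (x k) := by
    intro k l hk hkl
    induction l, hkl using Nat.le_induction with
    | base => exact le_refl _
    | succ m hm ih => exact le_trans (hdec m (le_trans hk hm)) ih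
  have hftend : Tendsto (fun j => f (x (φ j))) atTop (𝓝 (f xbar)) :=
    (hf.continuous.tendsto xbar).comp hφtend
  have hge : ∀ k, N₀ ≤ k → f xbar ≤ f (x k) := by
    intro k hk
    refine le_of_tendsto hftend ?_
    filter_upwards [eventually_ge_atTop k] with j hj
    exact hdec' k (φ j) hk (le_trans hj hφmono.le_apply)
  by_cases hA : ∃ m, N₀ ≤ m ∧ f (x m) = f xbar
  · -- Case A : the value f xbar is attained; the sequence is eventually constant
    obtain ⟨m, hm, hfm⟩ := hA
    have hconst : ∀ k, m ≤ k → x k = x m := by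
      intro k hk
      induction k, hk using Nat.le_induction with
      | base => rfl
      | succ l hl ih =>
        have h1 : f (x (l + 1)) = f (x l) := by
          have a1 := hdec' m (l + 1) hm (le_trans hl (Nat.le_succ l))
          have a2 := hge (l + 1) (le_trans hm (le_trans hl (Nat.le_succ l)))
          have a3 := hdec' m l hm hl
          have a4 := hge l (le_trans hm hl)
          linarith
        rw [hH2' l (le_trans hm hl) h1, ih]
    have hxm : x m = xbar := by
      have h2 : Tendsto (fun j => x (φ j)) atTop (𝓝 (x m)) := by
        refine Tendsto.congr' ?_ tendsto_const_nhds
        filter_upwards [eventually_ge_atTop m] with j hj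
        exact (hconst (φ j) (le_trans hj hφmono.le_apply)).symm
      exact tendsto_nhds_unique h2 hφtend
    refine Tendsto.congr' ?_ tendsto_const_nhds
    filter_upwards [eventually_ge_atTop m] with k hk
    rw [hconst k hk, hxm]
  · -- Case B : f (x k) > f xbar for all k ≥ N₀
    push_neg at hA
    have hpos : ∀ k, N₀ ≤ k → f xbar < f (x k) :=
      fun k hk => lt_of_le_of_ne (hge k hk) (Ne.symm (hA k hk))
    set d : ℕ → ℝ := fun k => f (x k) - f xbar with hddef
    have hdpos : ∀ k, N₀ ≤ k → 0 < d k := fun k hk => sub_pos.mpr (hpos k hk)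
    have hdanti : ∀ k l, N₀ ≤ k → k ≤ l → d l ≤ d k :=
      fun k l hk hkl => sub_le_sub_right (hdec' k l hk hkl) _
    have hdφ : Tendsto (fun j => d (φ j)) atTop (𝓝 0) := by
      have h := hftend.sub_const (f xbar)
      simpa [hddef] using h
    obtain ⟨ε, hε, hball⟩ := Metric.mem_nhds_iff.mp hU
    set g : ℝ → ℝ := fun s => 1 / ψ s with hgdef
    set Ψ : ℝ → ℝ := fun t => ∫ s in Set.Ioc (0 : ℝ) t, g s with hΨdef
    have hsub : ∀ t : ℝ, t < η → Set.Ioc (0 : ℝ) t ⊆ Set.Ioo 0 η :=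
      fun t ht s hs => ⟨hs.1, lt_of_le_of_lt hs.2 ht⟩
    have hgint : ∀ t : ℝ, t < η → IntegrableOn g (Set.Ioc 0 t) :=
      fun t ht => hψint.mono_set (hsub t ht)
    have hgnn : ∀ s ∈ Set.Ioo (0 : ℝ) η, 0 ≤ g s :=
      fun s hs => one_div_nonneg.mpr (hψpos s hs).le
    have hΨnonneg : ∀ t : ℝ, t < η → 0 ≤ Ψ t := fun t ht =>
      setIntegral_nonneg measurableSet_Ioc (fun s hs => hgnn s (hsub t ht hs))
    have hΨdiff : ∀ a b : ℝ, 0 < b → b ≤ a → a < η →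
        (a - b) / ψ a ≤ Ψ a - Ψ b := by
      intro a b hb hba haη
      have hss : Set.Ioc b a ⊆ Set.Ioc (0 : ℝ) a := Set.Ioc_subset_Ioc_left hb.le
      have hsplit : Ψ a = Ψ b + ∫ s in Set.Ioc b a, g s := by
        rw [hΨdef]
        simp only
        rw [← Set.Ioc_union_Ioc_eq_Ioc hb.le hba,
          setIntegral_union (Set.Ioc_disjoint_Ioc_of_le le_rfl) measurableSet_Ioc
            ((hgint a haη).mono_set (Set.Ioc_subset_Ioc_right hba))
            ((hgint a haη).mono_set hss)]
      have hsetle : ∀ s ∈ Set.Ioc b a, (1 : ℝ) / ψ a ≤ g s := by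
        intro s hs
        have hsmem : s ∈ Set.Ioo (0 : ℝ) η :=
          ⟨lt_trans hb hs.1, lt_of_le_of_lt hs.2 haη⟩
        have hamem : a ∈ Set.Ioo (0 : ℝ) η := ⟨lt_of_lt_of_le hb hba, haη⟩
        exact one_div_le_one_div_of_le (hψpos s hsmem) (hψmono hsmem hamem hs.2)
      have hle := setIntegral_ge_of_const_le_real measurableSet_Ioc
        (by simp [Real.volume_Ioc] : volume (Set.Ioc b a) ≠ ⊤) hsetle
        ((hgint a haη).mono_set hss)
      rw [Real.volume_real_Ioc, max_eq_left (by linarith : (0:ℝ) ≤ a - b)] at hle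
      have heq : (a - b) / ψ a = 1 / ψ a * (a - b) := by ring
      rw [heq]
      linarith [hsplit, hle]
    have hgaes : AEStronglyMeasurable g (volume.restrict (Set.Ioo (0 : ℝ) η)) :=
      hψint.aestronglyMeasurable
    have hΨ0 : Tendsto (fun j => Ψ (d (φ j))) atTop (𝓝 0) := by
      have key : Tendsto
          (fun j => ∫ s in Set.Ioo (0 : ℝ) η,
            (Set.Ioc (0 : ℝ) (d (φ j))).indicator g s) atTop
          (𝓝 (∫ _s in Set.Ioo (0 : ℝ) η, (0 : ℝ))) := by
        refine tendsto_integral_of_dominated_convergence (fun s => ‖g s‖)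
          (fun j => hgaes.indicator measurableSet_Ioc) hψint.norm ?_ ?_
        · intro j
          filter_upwards with s
          exact norm_indicator_le_norm_self g s
        · filter_upwards [ae_restrict_mem measurableSet_Ioo] with s hs
          have hev : ∀ᶠ j in atTop, d (φ j) < s :=
            hdφ.eventually (eventually_lt_nhds hs.1)
          refine Tendsto.congr' ?_ tendsto_const_nhds
          filter_upwards [hev] with j hj
          have : s ∉ Set.Ioc (0 : ℝ) (d (φ j)) := fun hmem => absurd hmem.2 (not_le.mpr hj)
          simp [Set.indicator_of_notMem this]
      simp only [integral_zero] at key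
      refine Tendsto.congr' ?_ key
      filter_upwards [hdφ.eventually (eventually_lt_nhds hη)] with j hj
      rw [setIntegral_indicator measurableSet_Ioc,
        Set.inter_eq_right.mpr (hsub _ hj)]
    have hnorm0 : Tendsto (fun j => ‖x (φ j) - xbar‖) atTop (𝓝 0) :=
      tendsto_iff_norm_sub_tendsto_zero.mp hφtend
    have hsum0 : Tendsto (fun j => ‖x (φ j) - xbar‖ + Ψ (d (φ j)) / σ) atTop (𝓝 0) := by
      have h := hnorm0.add (hΨ0.div_const σ)
      simpa using h
    obtain ⟨j₀, hj₀N, hj₀η, hj₀ε⟩ :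
        ∃ j, N₀ ≤ j ∧ d (φ j) < η ∧ ‖x (φ j) - xbar‖ + Ψ (d (φ j)) / σ < ε := by
      have e1 : ∀ᶠ j in atTop, N₀ ≤ j := eventually_ge_atTop N₀
      have e2 : ∀ᶠ j in atTop, d (φ j) < η := hdφ.eventually (eventually_lt_nhds hη)
      have e3 : ∀ᶠ j in atTop, ‖x (φ j) - xbar‖ + Ψ (d (φ j)) / σ < ε :=
        hsum0.eventually (eventually_lt_nhds hε)
      obtain ⟨j, hj⟩ := (e1.and (e2.and e3)).exists
      exact ⟨j, hj.1, hj.2.1, hj.2.2⟩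
    set K := φ j₀ with hKdef
    have hKN₀ : N₀ ≤ K := le_trans hj₀N hφmono.le_apply
    have hdK : d K < η := hj₀η
    have hKε' : σ * ‖x K - xbar‖ + Ψ (d K) < σ * ε := by
      have h := mul_lt_mul_of_pos_left hj₀ε hσ
      rw [mul_add, mul_div_cancel₀ _ (ne_of_gt hσ)] at h
      exact h
    -- one–step estimate, valid whenever the iterate is inside the ball
    have step : ∀ m, K ≤ m → ‖x m - xbar‖ < ε →
        σ * ‖x (m + 1) - x m‖ ≤ Ψ (d m) - Ψ (d (m + 1)) := by
      intro m hm hmball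
      have hmN : N₀ ≤ m := le_trans hKN₀ hm
      have hdm_pos : 0 < d m := hdpos m hmN
      have hdm1_pos : 0 < d (m + 1) := hdpos (m + 1) (le_trans hmN (Nat.le_succ m))
      have hdm_lt : d m < η := lt_of_le_of_lt (hdanti K m hKN₀ hm) hdK
      have hdle : d (m + 1) ≤ d m := hdanti m (m + 1) hmN (Nat.le_succ m)
      have hmem : x m ∈ U := hball (by simpa [Metric.mem_ball, dist_eq_norm] using hmball)
      have hKLm : ψ (d m) ≤ ‖gradient f (x m)‖ := by
        have hlt : f (x m) < f xbar + η := by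
          have : d m = f (x m) - f xbar := rfl
          linarith
        exact hKLineq (x m) hmem (hpos m hmN) hlt
      have hψdm : 0 < ψ (d m) := hψpos _ ⟨hdm_pos, hdm_lt⟩
      have h1 := hH1' m hmN
      have h2 : σ * ψ (d m) * ‖x (m + 1) - x m‖ ≤ d m - d (m + 1) := by
        have hmul : σ * ψ (d m) * ‖x (m + 1) - x m‖ ≤
            σ * ‖gradient f (x m)‖ * ‖x (m + 1) - x m‖ := by
          have := mul_le_mul_of_nonneg_left hKLm hσ.le
          exact mul_le_mul_of_nonneg_right this (norm_nonneg _)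
        have heq : d m - d (m + 1) = f (x m) - f (x (m + 1)) := by
          simp [hddef]
        rw [heq]
        exact le_trans hmul h1
      have h3 : σ * ‖x (m + 1) - x m‖ ≤ (d m - d (m + 1)) / ψ (d m) := by
        rw [le_div_iff₀ hψdm]
        nlinarith [h2]
      exact le_trans h3 (hΨdiff (d m) (d (m + 1)) hdm1_pos hdle hdm_lt)
    -- main invariant
    have main : ∀ m, K ≤ m →
        σ * ‖x m - xbar‖ + Ψ (d m) ≤ σ * ‖x K - xbar‖ + Ψ (d K) := by
      intro m hm
      induction m, hm using Nat.le_induction with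
      | base => exact le_refl _
      | succ m hm ih =>
        have hΨm : 0 ≤ Ψ (d m) := hΨnonneg _ (lt_of_le_of_lt (hdanti K m hKN₀ hm) hdK)
        have hmball : ‖x m - xbar‖ < ε := by
          have h : σ * ‖x m - xbar‖ < σ * ε := by linarith
          exact lt_of_mul_lt_mul_left h hσ.le
        have hs := step m hm hmball
        have htri : ‖x (m + 1) - xbar‖ ≤ ‖x m - xbar‖ + ‖x (m + 1) - x m‖ := by
          have := norm_sub_le_norm_sub_add_norm_sub (x (m + 1)) (x m) xbar
          linarith [this, norm_sub_rev (x (m + 1)) (x m)]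
        have htri' : σ * ‖x (m + 1) - xbar‖ ≤ σ * ‖x m - xbar‖ + σ * ‖x (m + 1) - x m‖ := by
          nlinarith [htri]
        linarith
    have hballm : ∀ m, K ≤ m → ‖x m - xbar‖ < ε := by
      intro m hm
      have hΨm : 0 ≤ Ψ (d m) := hΨnonneg _ (lt_of_le_of_lt (hdanti K m hKN₀ hm) hdK)
      have h := main m hm
      have h2 : σ * ‖x m - xbar‖ < σ * ε := by linarith
      exact lt_of_mul_lt_mul_left h2 hσ.le
    -- summability of the step lengths
    set u : ℕ → ℝ := fun j => ‖x (K + j + 1) - x (K + j)‖ with hudef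
    have hstep' : ∀ j : ℕ, σ * u j ≤ Ψ (d (K + j)) - Ψ (d (K + j + 1)) := by
      intro j
      exact step (K + j) (Nat.le_add_right K j) (hballm (K + j) (Nat.le_add_right K j))
    have hsumbound : ∀ N : ℕ, ∑ j ∈ Finset.range N, u j ≤ Ψ (d K) / σ := by
      intro N
      have h1 : ∑ j ∈ Finset.range N, σ * u j ≤
          ∑ j ∈ Finset.range N, (Ψ (d (K + j)) - Ψ (d (K + j + 1))) :=
        Finset.sum_le_sum fun j _ => hstep' j
      have h2 : ∑ j ∈ Finset.range N, (Ψ (d (K + j)) - Ψ (d (K + j + 1))) =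
          Ψ (d (K + 0)) - Ψ (d (K + N)) :=
        Finset.sum_range_sub' (fun j => Ψ (d (K + j))) N
      have hΨN : 0 ≤ Ψ (d (K + N)) :=
        hΨnonneg _ (lt_of_le_of_lt (hdanti K (K + N) hKN₀ (Nat.le_add_right K N)) hdK)
      have h3 : σ * ∑ j ∈ Finset.range N, u j ≤ Ψ (d K) := by
        rw [Finset.mul_sum]
        have : Ψ (d (K + 0)) = Ψ (d K) := by norm_num
        rw [this] at h2
        linarith [h1, h2.le, hΨN]
      rw [le_div_iff₀ hσ]
      nlinarith [h3]
    have husum : Summable u :=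
      summable_of_sum_range_le (fun j => norm_nonneg _) hsumbound
    have hcauchy : CauchySeq (fun j => x (K + j)) := by
      apply cauchySeq_of_summable_dist
      refine husum.congr fun j => ?_
      rw [hudef]
      simp only [dist_eq_norm, Nat.succ_eq_add_one]
      rw [norm_sub_rev]
      ring_nf
    obtain ⟨L, hL⟩ := cauchySeq_tendsto_of_complete hcauchy
    have hx : Tendsto x atTop (𝓝 L) := by
      rw [← tendsto_add_atTop_iff_nat K]
      exact hL.congr fun j => congrArg x (Nat.add_comm K j)
    have hLxbar : xbar = L :=
      tendsto_nhds_unique hφtend (hx.comp hφmono.tendsto_atTop)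
    rwa [hLxbar]
end

section
/- Let f : ℝⁿ → ℝ be a C¹-smooth function and let {x^k}, {d^k} ⊂ ℝⁿ satisfy x^{k+1} = x^k + τ d^k with x^{k+1} ≠ x^k for all k, where τ > 0. Assume there are constants α, β > 0 such that f(x^k) − f(x^{k+1}) ≥ α‖d^k‖² and ‖∇f(x^k)‖ ≤ β‖d^k‖ for all sufficiently large k. If x̄ is an accumulation point of {x^k} and f satisfies the KL property at x̄ with ψ(t) = M t^q for some M > 0 and q ∈ (0, 1/2], then {x^k} converges linearly to x̄: there exist c > 0 and ρ ∈ (0,1) such that ‖x^k − x̄‖ ≤ c ρ^k for all k. -/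
open Filter Topology

set_option maxHeartbeats 1000000 in
/-- Linear convergence of the iterates under the descent-type
conditions and the KL property with exponent q ∈ (0, 1/2]. -/
theorem linear_rate_under_KL {n : ℕ}
    (f : EuclideanSpace ℝ (Fin n) → ℝ) (hf : ContDiff ℝ 1 f)
    (x d : ℕ → EuclideanSpace ℝ (Fin n)) (τ : ℝ) (hτ : 0 < τ)
    (hiter : ∀ k : ℕ, x (k + 1) = x k + τ • d k)
    (hne : ∀ k : ℕ, x (k + 1) ≠ x k)
    (α β : ℝ) (hα : 0 < α) (hβ : 0 < β)
    (hdesc : ∀ᶠ k in atTop, α * ‖d k‖ ^ 2 ≤ f (x k) - f (x (k + 1)))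
    (hgrad : ∀ᶠ k in atTop, ‖gradient f (x k)‖ ≤ β * ‖d k‖)
    (xbar : EuclideanSpace ℝ (Fin n))
    (hacc : ∃ φ : ℕ → ℕ, StrictMono φ ∧ Tendsto (fun k => x (φ k)) atTop (𝓝 xbar))
    (M q : ℝ) (hM : 0 < M) (hq : q ∈ Set.Ioc (0 : ℝ) (1 / 2))
    (hKL : ∃ η > (0 : ℝ), ∃ U ∈ 𝓝 xbar,
      ∀ y ∈ U, f xbar < f y → f y < f xbar + η →
        M * (f y - f xbar) ^ q ≤ ‖gradient f y‖) :
    ∃ c > (0 : ℝ), ∃ ρ ∈ Set.Ioo (0 : ℝ) 1, ∀ k : ℕ, ‖x k - xbar‖ ≤ c * ρ ^ k := by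
  obtain ⟨φ, hφmono, hφtend⟩ := hacc
  obtain ⟨η, hη, U, hU, hKLU⟩ := hKL
  have hφle : ∀ j, j ≤ φ j := fun j => hφmono.le_apply
  have hd0 : ∀ k, 0 < ‖d k‖ := by
    intro k
    have hdk : d k ≠ 0 := by
      intro h; apply hne k; rw [hiter k, h, smul_zero, add_zero]
    simpa [norm_pos_iff] using hdk
  obtain ⟨N0, hN0⟩ : ∃ N0, ∀ k, N0 ≤ k →
      α * ‖d k‖ ^ 2 ≤ f (x k) - f (x (k+1)) ∧ ‖gradient f (x k)‖ ≤ β * ‖d k‖ := by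
    obtain ⟨N1, h1⟩ := eventually_atTop.mp hdesc
    obtain ⟨N2, h2⟩ := eventually_atTop.mp hgrad
    exact ⟨max N1 N2, fun k hk =>
      ⟨h1 k (le_trans (le_max_left _ _) hk), h2 k (le_trans (le_max_right _ _) hk)⟩⟩
  set e : ℕ → ℝ := fun k => f (x k) - f xbar with he
  have hdec : ∀ k, N0 ≤ k → e (k+1) < e k := by
    intro k hk
    have h1 := (hN0 k hk).1
    have h2 := hd0 k
    simp only [he]
    nlinarith [mul_pos hα (pow_pos h2 2)]
  have hmono : ∀ k, N0 ≤ k → ∀ m, k ≤ m → e m ≤ e k := by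
    intro k hk m hm
    induction hm with
    | refl => exact le_refl _
    | @step m hm ih => exact le_trans (hdec m (le_trans hk hm)).le ih
  -- e (φ j) → 0
  have htendf : Tendsto (fun j => e (φ j)) atTop (𝓝 0) := by
    have h1 : Tendsto (fun j => f (x (φ j))) atTop (𝓝 (f xbar)) :=
      (hf.continuous.tendsto xbar).comp hφtend
    simpa using h1.sub_const (f xbar)
  -- nonnegativity
  have hnneg : ∀ k, N0 ≤ k → 0 ≤ e k := by
    intro k hk
    refine le_of_tendsto htendf (eventually_atTop.mpr ⟨k, fun j hj => ?_⟩)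
    exact hmono k hk (φ j) (le_trans hj (hφle j))
  have hepos : ∀ k, N0 ≤ k → 0 < e k := by
    intro k hk
    exact lt_of_le_of_lt (hnneg (k+1) (by omega)) (hdec k hk)
  -- e eventually small
  have hesmall : ∀ ε : ℝ, 0 < ε → ∃ K, N0 ≤ K ∧ ∀ k, K ≤ k → e k < ε := by
    intro ε hε
    have h1 : ∀ᶠ j in atTop, e (φ j) < ε := htendf.eventually_lt_const hε
    have h2 : ∀ᶠ j in atTop, N0 ≤ φ j :=
      eventually_atTop.mpr ⟨N0, fun j hj => le_trans hj (hφle j)⟩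
    obtain ⟨j, hj1, hj2⟩ := (h1.and h2).exists
    exact ⟨φ j, hj2, fun k hk => lt_of_le_of_lt (hmono (φ j) hj2 k hk) hj1⟩
  -- the KL one-step estimate
  set C : ℝ := α * (M / β) ^ 2 with hCdef
  have hC : 0 < C := by positivity
  have hstep : ∀ k, N0 ≤ k → x k ∈ U → e k ≤ 1 → e k < η →
      e (k+1) ≤ (1 - C) * e k ∧ α * ‖d k‖ ^ 2 ≤ e k := by
    intro k hk hkU hk1 hkη
    have hek : 0 < e k := hepos k hk
    have hKLk : M * (e k) ^ q ≤ ‖gradient f (x k)‖ := by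
      refine hKLU (x k) hkU ?_ ?_
      · simp only [he] at hek; linarith
      · simp only [he] at hkη; linarith
    have h2 : M * (e k) ^ q ≤ β * ‖d k‖ := le_trans hKLk (hN0 k hk).2
    have hrq : 0 ≤ (e k) ^ q := Real.rpow_nonneg hek.le q
    have h4 : (M / β) ^ 2 * ((e k) ^ q) ^ 2 ≤ ‖d k‖ ^ 2 := by
      have h3 : (M / β) * (e k) ^ q ≤ ‖d k‖ := by
        rw [div_mul_eq_mul_div, div_le_iff₀ hβ]
        linarith [h2]
      have h5 : 0 ≤ (M / β) * (e k) ^ q := by positivity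
      nlinarith [h3, h5]
    have h5 : e k ≤ ((e k) ^ q) ^ 2 := by
      have hsq : ((e k) ^ q) ^ 2 = (e k) ^ (q + q) := by
        rw [sq, ← Real.rpow_add hek]
      rw [hsq]
      calc e k = (e k) ^ (1 : ℝ) := (Real.rpow_one _).symm
        _ ≤ (e k) ^ (q + q) :=
          Real.rpow_le_rpow_of_exponent_ge hek hk1 (by linarith [hq.2])
    have h6 := (hN0 k hk).1
    have h7 : e k - e (k+1) = f (x k) - f (x (k+1)) := by simp only [he]; ring
    constructor
    · have hkey : C * e k ≤ e k - e (k+1) := by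
        rw [h7, hCdef]
        calc α * (M / β) ^ 2 * e k ≤ α * (M / β) ^ 2 * ((e k) ^ q) ^ 2 :=
              mul_le_mul_of_nonneg_left h5 (by positivity)
          _ = α * ((M / β) ^ 2 * ((e k) ^ q) ^ 2) := by ring
          _ ≤ α * ‖d k‖ ^ 2 := mul_le_mul_of_nonneg_left h4 hα.le
          _ ≤ f (x k) - f (x (k+1)) := h6
      linarith
    · have h8 : 0 ≤ e (k+1) := hnneg (k+1) (by omega)
      linarith
  -- a ball inside U
  obtain ⟨r, hr, hrU⟩ := Metric.mem_nhds_iff.mp hU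
  -- establish 0 < 1 - C using one iterate in U
  obtain ⟨K2, hK2N0, hK2⟩ := hesmall (min 1 η) (lt_min one_pos hη)
  have hevU : ∀ᶠ j in atTop, x (φ j) ∈ U :=
    hφtend.eventually (eventually_of_mem hU (fun y hy => hy))
  obtain ⟨j0, hj0U, hj0ge⟩ : ∃ j, x (φ j) ∈ U ∧ K2 ≤ φ j := by
    obtain ⟨j, h1, h2⟩ := (hevU.and
      (eventually_atTop.mpr ⟨K2, fun j hj => le_trans hj (hφle j)⟩)).exists
    exact ⟨j, h1, h2⟩
  have hρ0 : 0 < 1 - C := by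
    have hsm := hK2 (φ j0) hj0ge
    have hs := hstep (φ j0) (le_trans hK2N0 hj0ge) hj0U
      (le_of_lt (lt_of_lt_of_le hsm (min_le_left _ _)))
      (lt_of_lt_of_le hsm (min_le_right _ _))
    have h1 := hepos (φ j0 + 1) (by omega)
    have h2 := hepos (φ j0) (le_trans hK2N0 hj0ge)
    nlinarith [hs.1]
  set ρ : ℝ := 1 - C with hρdef
  have hρ1 : ρ < 1 := by simp only [hρdef]; linarith
  set σ : ℝ := Real.sqrt ρ with hσdef
  have hσ0 : 0 < σ := Real.sqrt_pos.mpr hρ0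
  have hσsq : σ ^ 2 = ρ := Real.sq_sqrt hρ0.le
  have hσ1 : σ < 1 := by nlinarith [hσ0]

  -- choose starting index K1
  set ε0 : ℝ := min (min 1 η) (α * ((1 - σ) * r / (2 * τ)) ^ 2) with hε0def
  have h1σ : (0:ℝ) < 1 - σ := by linarith
  have hε0 : 0 < ε0 := by
    apply lt_min (lt_min one_pos hη)
    positivity
  obtain ⟨K3, hK3N0, hK3⟩ := hesmall ε0 hε0
  have hevB : ∀ᶠ j in atTop, x (φ j) ∈ Metric.ball xbar (r / 2) :=
    hφtend.eventually (eventually_of_mem (Metric.ball_mem_nhds xbar (by linarith)) (fun y hy => hy))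
  obtain ⟨j1, hj1B, hj1ge⟩ : ∃ j, x (φ j) ∈ Metric.ball xbar (r / 2) ∧ K3 ≤ φ j := by
    obtain ⟨j, h1, h2⟩ := (hevB.and
      (eventually_atTop.mpr ⟨K3, fun j hj => le_trans hj (hφle j)⟩)).exists
    exact ⟨j, h1, h2⟩
  set K1 := φ j1 with hK1def
  have hK1N0 : N0 ≤ K1 := le_trans hK3N0 hj1ge
  have heK1pos : 0 < e K1 := hepos K1 hK1N0
  have hktail : ∀ k, K1 ≤ k → e k < ε0 := fun k hk => hK3 k (le_trans hj1ge hk)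
  set G : ℝ := τ * Real.sqrt (e K1 / α) with hGdef
  have hG0 : 0 < G := by
    have h1 := Real.sqrt_pos.mpr (div_pos heK1pos hα)
    positivity
  have hGr : G * (1 - σ)⁻¹ ≤ r / 2 := by
    have h1 : e K1 ≤ α * ((1 - σ) * r / (2 * τ)) ^ 2 :=
      le_of_lt (lt_of_lt_of_le (hktail K1 le_rfl) (min_le_right _ _))
    have h2 : e K1 / α ≤ ((1 - σ) * r / (2 * τ)) ^ 2 := by
      rw [div_le_iff₀ hα]; linarith
    have hnn : 0 ≤ (1 - σ) * r / (2 * τ) := by positivity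
    have h3 : Real.sqrt (e K1 / α) ≤ (1 - σ) * r / (2 * τ) := by
      calc Real.sqrt (e K1 / α) ≤ Real.sqrt (((1 - σ) * r / (2 * τ)) ^ 2) := Real.sqrt_le_sqrt h2
        _ = (1 - σ) * r / (2 * τ) := Real.sqrt_sq hnn
    have h4 : G ≤ (1 - σ) * (r / 2) := by
      rw [hGdef]
      calc τ * Real.sqrt (e K1 / α) ≤ τ * ((1 - σ) * r / (2 * τ)) :=
            mul_le_mul_of_nonneg_left h3 hτ.le
        _ = (1 - σ) * (r / 2) := by field_simp
    rw [show G * (1 - σ)⁻¹ = G / (1 - σ) by ring, div_le_iff₀ h1σ]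
    nlinarith [h4]
  -- per-step displacement bound
  have hdisp : ∀ k, α * ‖d k‖ ^ 2 ≤ e k → ‖x (k+1) - x k‖ ≤ τ * Real.sqrt (e k / α) := by
    intro k hk
    have h1 : ‖x (k+1) - x k‖ = τ * ‖d k‖ := by
      rw [hiter k, add_sub_cancel_left, norm_smul, Real.norm_eq_abs, abs_of_pos hτ]
    rw [h1]
    refine mul_le_mul_of_nonneg_left ?_ hτ.le
    have h2 : ‖d k‖ ^ 2 ≤ e k / α := by rw [le_div_iff₀ hα]; linarith [hk]
    calc ‖d k‖ = Real.sqrt (‖d k‖ ^ 2) := (Real.sqrt_sq (norm_nonneg _)).symm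
      _ ≤ Real.sqrt (e k / α) := Real.sqrt_le_sqrt h2
  have hsqrtρ : ∀ m : ℕ, Real.sqrt (ρ ^ m) = σ ^ m := by
    intro m
    rw [show ρ ^ m = (σ ^ m) ^ 2 by rw [← hσsq]; ring,
      Real.sqrt_sq (pow_nonneg hσ0.le m)]
  have hj1B' : ‖x K1 - xbar‖ < r / 2 := by
    rw [Metric.mem_ball, dist_eq_norm] at hj1B; exact hj1B
  have hε0min : ε0 ≤ min 1 η := min_le_left _ _
  -- main induction
  have hmain : ∀ m : ℕ, e (K1 + m) ≤ e K1 * ρ ^ m ∧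
      ‖x (K1 + m) - x K1‖ ≤ G * (1 - σ)⁻¹ * (1 - σ ^ m) ∧
      ‖x (K1 + m + 1) - x (K1 + m)‖ ≤ G * σ ^ m := by
    have key : ∀ m : ℕ, e (K1 + m) ≤ e K1 * ρ ^ m ∧
        ‖x (K1 + m) - x K1‖ ≤ G * (1 - σ)⁻¹ * (1 - σ ^ m) → 
        e (K1 + m + 1) ≤ ρ * e (K1 + m) ∧
        ‖x (K1 + m + 1) - x (K1 + m)‖ ≤ G * σ ^ m := by
      intro m ⟨ih1, ih2⟩
      have hσm0 : (0:ℝ) ≤ σ ^ m := pow_nonneg hσ0.le m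
      have hσm1 : σ ^ m ≤ 1 := pow_le_one₀ hσ0.le hσ1.le
      have hinv : (0:ℝ) ≤ (1 - σ)⁻¹ := (inv_pos.mpr h1σ).le
      have hball : x (K1 + m) ∈ U := by
        apply hrU
        rw [Metric.mem_ball, dist_eq_norm]
        have h2 : ‖x (K1 + m) - xbar‖ ≤ ‖x (K1 + m) - x K1‖ + ‖x K1 - xbar‖ := by
          have heq : x (K1 + m) - xbar = (x (K1 + m) - x K1) + (x K1 - xbar) := by abel
          rw [heq]; exact norm_add_le _ _
        have h3 : G * (1 - σ)⁻¹ * (1 - σ ^ m) ≤ r / 2 := by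
          nlinarith [hGr, hG0, hσm0, hinv]
        linarith
      have hsm : e (K1 + m) < ε0 := hktail _ (Nat.le_add_right _ _)
      have hs := hstep (K1 + m) (le_trans hK1N0 (Nat.le_add_right _ _)) hball
        (le_of_lt (lt_of_lt_of_le hsm (le_trans hε0min (min_le_left _ _))))
        (lt_of_lt_of_le hsm (le_trans hε0min (min_le_right _ _)))
      refine ⟨by rw [hρdef]; exact hs.1, ?_⟩
      have hd1 : ‖x (K1 + m + 1) - x (K1 + m)‖ ≤ τ * Real.sqrt (e (K1 + m) / α) :=
        hdisp _ hs.2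
      have h1 : e (K1 + m) / α ≤ e K1 / α * ρ ^ m := by
        rw [div_le_iff₀ hα]
        calc e (K1 + m) ≤ e K1 * ρ ^ m := ih1
          _ = e K1 / α * ρ ^ m * α := by field_simp
      have h2 : Real.sqrt (e (K1 + m) / α) ≤ Real.sqrt (e K1 / α) * σ ^ m := by
        calc Real.sqrt (e (K1 + m) / α) ≤ Real.sqrt (e K1 / α * ρ ^ m) := Real.sqrt_le_sqrt h1
          _ = Real.sqrt (e K1 / α) * Real.sqrt (ρ ^ m) := Real.sqrt_mul (by positivity) _
          _ = Real.sqrt (e K1 / α) * σ ^ m := by rw [hsqrtρ]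
      calc ‖x (K1 + m + 1) - x (K1 + m)‖ ≤ τ * Real.sqrt (e (K1 + m) / α) := hd1
        _ ≤ τ * (Real.sqrt (e K1 / α) * σ ^ m) := mul_le_mul_of_nonneg_left h2 hτ.le
        _ = G * σ ^ m := by rw [hGdef]; ring
    intro m
    induction m with
    | zero =>
      have h0 : e (K1 + 0) ≤ e K1 * ρ ^ 0 ∧ ‖x (K1 + 0) - x K1‖ ≤ G * (1 - σ)⁻¹ * (1 - σ ^ 0) := by
        constructor <;> simp
      exact ⟨h0.1, h0.2, (key 0 h0).2⟩
    | succ m ih =>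
      obtain ⟨ih1, ih2, ih3⟩ := ih
      have hk := key m ⟨ih1, ih2⟩
      have hne1 : (1:ℝ) - σ ≠ 0 := ne_of_gt h1σ
      have h1 : e (K1 + (m + 1)) ≤ e K1 * ρ ^ (m + 1) := by
        calc e (K1 + (m + 1)) = e (K1 + m + 1) := by ring_nf
          _ ≤ ρ * e (K1 + m) := hk.1
          _ ≤ ρ * (e K1 * ρ ^ m) := mul_le_mul_of_nonneg_left ih1 hρ0.le
          _ = e K1 * ρ ^ (m + 1) := by ring
      have heqid : G * σ ^ m + G * (1 - σ)⁻¹ * (1 - σ ^ m) = G * (1 - σ)⁻¹ * (1 - σ ^ (m + 1)) := by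
        field_simp
        ring
      have h2 : ‖x (K1 + (m + 1)) - x K1‖ ≤ G * (1 - σ)⁻¹ * (1 - σ ^ (m + 1)) := by
        have htri : ‖x (K1 + (m + 1)) - x K1‖ ≤
            ‖x (K1 + m + 1) - x (K1 + m)‖ + ‖x (K1 + m) - x K1‖ := by
          have heq2 : x (K1 + (m + 1)) - x K1 =
              (x (K1 + m + 1) - x (K1 + m)) + (x (K1 + m) - x K1) := by
            rw [show K1 + (m + 1) = K1 + m + 1 from rfl]; abel
          rw [heq2]; exact norm_add_le _ _
        linarith [hk.2, heqid]
      exact ⟨h1, h2, (key (m + 1) ⟨h1, h2⟩).2⟩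
  -- telescoping tail bound
  have htail : ∀ m m' : ℕ, m ≤ m' →
      ‖x (K1 + m') - x (K1 + m)‖ ≤ G * (1 - σ)⁻¹ * (σ ^ m - σ ^ m') := by
    intro m m' hm
    induction hm with
    | refl => simp
    | @step m' hm ih =>
      have hne1 : (1:ℝ) - σ ≠ 0 := ne_of_gt h1σ
      have heqid : G * σ ^ m' + G * (1 - σ)⁻¹ * (σ ^ m - σ ^ m') =
          G * (1 - σ)⁻¹ * (σ ^ m - σ ^ (m' + 1)) := by
        field_simp
        ring
      have htri : ‖x (K1 + (m' + 1)) - x (K1 + m)‖ ≤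
          ‖x (K1 + m' + 1) - x (K1 + m')‖ + ‖x (K1 + m') - x (K1 + m)‖ := by
        have heq2 : x (K1 + (m' + 1)) - x (K1 + m) =
            (x (K1 + m' + 1) - x (K1 + m')) + (x (K1 + m') - x (K1 + m)) := by
          rw [show K1 + (m' + 1) = K1 + m' + 1 from rfl]; abel
        rw [heq2]; exact norm_add_le _ _
      show ‖x (K1 + (m' + 1)) - x (K1 + m)‖ ≤ G * (1 - σ)⁻¹ * (σ ^ m - σ ^ (m' + 1))
      linarith [(hmain m').2.2, heqid]
  -- limit bound: distance to xbar
  have hlim : ∀ m : ℕ, ‖x (K1 + m) - xbar‖ ≤ G * (1 - σ)⁻¹ * σ ^ m := by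
    intro m
    have h1 : Tendsto (fun j => ‖x (φ j) - x (K1 + m)‖) atTop (𝓝 ‖xbar - x (K1 + m)‖) :=
      ((hφtend.sub_const _).norm)
    rw [norm_sub_rev]
    refine le_of_tendsto h1 (eventually_atTop.mpr ⟨K1 + m, fun j hj => ?_⟩)
    have hj2 : K1 + m ≤ φ j := le_trans hj (hφle j)
    obtain ⟨m', hm'1, hm'2⟩ : ∃ m', φ j = K1 + m' ∧ m ≤ m' := ⟨φ j - K1, by omega, by omega⟩
    have hinv : (0:ℝ) ≤ (1 - σ)⁻¹ := (inv_pos.mpr h1σ).le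
    calc ‖x (φ j) - x (K1 + m)‖ = ‖x (K1 + m') - x (K1 + m)‖ := by rw [hm'1]
      _ ≤ G * (1 - σ)⁻¹ * (σ ^ m - σ ^ m') := htail m m' hm'2
      _ ≤ G * (1 - σ)⁻¹ * σ ^ m := by
          have hpr := mul_nonneg (mul_nonneg hG0.le hinv) (pow_nonneg hσ0.le m')
          nlinarith [hpr]
  -- final assembly
  set A : ℝ := G * (1 - σ)⁻¹ with hAdef
  have hA0 : 0 < A := by
    have h1 : (0:ℝ) < (1 - σ)⁻¹ := inv_pos.mpr h1σ
    positivity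
  set B : ℝ := (Finset.range (K1 + 1)).sup' (by simp) (fun k => ‖x k - xbar‖) with hBdef
  have hBk : ∀ k, k ≤ K1 → ‖x k - xbar‖ ≤ B := by
    intro k hk
    rw [hBdef]
    exact Finset.le_sup' (fun k => ‖x k - xbar‖) (Finset.mem_range.mpr (Nat.lt_succ_of_le hk))
  have hB0 : 0 ≤ B := le_trans (norm_nonneg _) (hBk 0 (Nat.zero_le _))
  have hσK1 : (0:ℝ) < σ ^ K1 := pow_pos hσ0 K1
  refine ⟨max (A / σ ^ K1) ((B + 1) / σ ^ K1), ?_, σ, ⟨hσ0, hσ1⟩, ?_⟩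
  · exact lt_of_lt_of_le (by positivity : (0:ℝ) < (B + 1) / σ ^ K1) (le_max_right _ _)
  · intro k
    have hσk : (0:ℝ) < σ ^ k := pow_pos hσ0 k
    by_cases hk : K1 ≤ k
    · obtain ⟨m, rfl⟩ : ∃ m, k = K1 + m := ⟨k - K1, by omega⟩
      have h2 : A * σ ^ m = A / σ ^ K1 * σ ^ (K1 + m) := by
        rw [pow_add]; field_simp
      calc ‖x (K1 + m) - xbar‖ ≤ A * σ ^ m := hlim m
        _ = A / σ ^ K1 * σ ^ (K1 + m) := h2
        _ ≤ max (A / σ ^ K1) ((B + 1) / σ ^ K1) * σ ^ (K1 + m) :=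
          mul_le_mul_of_nonneg_right (le_max_left _ _) (pow_pos hσ0 _).le
    · push_neg at hk
      have h1 : ‖x k - xbar‖ ≤ B := hBk k (by omega)
      have h2 : σ ^ K1 ≤ σ ^ k := pow_le_pow_of_le_one hσ0.le hσ1.le (by omega)
      have h3 : B + 1 ≤ (B + 1) / σ ^ K1 * σ ^ k := by
        rw [div_mul_eq_mul_div, le_div_iff₀ hσK1]
        nlinarith [h2]
      calc ‖x k - xbar‖ ≤ B := h1
        _ ≤ (B + 1) / σ ^ K1 * σ ^ k := by linarith
        _ ≤ max (A / σ ^ K1) ((B + 1) / σ ^ K1) * σ ^ k :=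
          mul_le_mul_of_nonneg_right (le_max_right _ _) hσk.le
end

section
/- Let f : ℝⁿ → ℝ be a C¹-smooth function and let {x^k}, {d^k} ⊂ ℝⁿ satisfy x^{k+1} = x^k + τ d^k with x^{k+1} ≠ x^k for all k, where τ > 0. Assume there are constants α, β > 0 such that f(x^k) − f(x^{k+1}) ≥ α‖d^k‖² and ‖∇f(x^k)‖ ≤ β‖d^k‖ for all sufficiently large k. If x̄ is an accumulation point of {x^k} and f satisfies the KL property at x̄ with ψ(t) = M t^q for some M > 0 and q ∈ (1/2, 1), then ‖x^k − x̄‖ = O(k^{−(1−q)/(2q−1)}) as k → ∞, i.e., there exists c > 0 such that ‖x^k − x̄‖ ≤ c k^{−(1−q)/(2q−1)} for all sufficiently large k. -/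
open Filter Topology

/-- Concavity inequality for `t ↦ t^p`, `0 ≤ p ≤ 1`. -/
lemma concave_rpow_ineq {p t s : ℝ} (hp0 : 0 ≤ p) (hp1 : p ≤ 1) (ht : 0 < t) (hs : 0 ≤ s) :
    s ^ p ≤ t ^ p + p * t ^ (p - 1) * (s - t) := by
  have hu : (-1 : ℝ) ≤ s / t - 1 := by
    have : 0 ≤ s / t := div_nonneg hs ht.le
    linarith
  have hber := rpow_one_add_le_one_add_mul_self hu hp0 hp1
  have h1 : (1 + (s / t - 1)) = s / t := by ring
  rw [h1] at hber
  have htp : 0 < t ^ p := Real.rpow_pos_of_pos ht p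
  rw [Real.div_rpow hs ht.le, div_le_iff₀ htp] at hber
  have h4 : t ^ (p - 1) = t ^ p / t := by
    rw [Real.rpow_sub ht, Real.rpow_one]
  rw [h4]
  have h5 : (1 + p * (s / t - 1)) * t ^ p = t ^ p + p * (t ^ p / t) * (s - t) := by
    field_simp
  linarith [h5 ▸ hber]

set_option maxHeartbeats 1000000 in
/-- Sublinear convergence rate of the iterates under the
descent-type conditions and the KL property with exponent q ∈ (1/2, 1). -/
theorem sublinear_rate_under_KL {n : ℕ}
    (f : EuclideanSpace ℝ (Fin n) → ℝ) (hf : ContDiff ℝ 1 f)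
    (x d : ℕ → EuclideanSpace ℝ (Fin n)) (τ : ℝ) (hτ : 0 < τ)
    (hiter : ∀ k : ℕ, x (k + 1) = x k + τ • d k)
    (hne : ∀ k : ℕ, x (k + 1) ≠ x k)
    (α β : ℝ) (hα : 0 < α) (hβ : 0 < β)
    (hdesc : ∀ᶠ k in atTop, α * ‖d k‖ ^ 2 ≤ f (x k) - f (x (k + 1)))
    (hgrad : ∀ᶠ k in atTop, ‖gradient f (x k)‖ ≤ β * ‖d k‖)
    (xbar : EuclideanSpace ℝ (Fin n))
    (hacc : ∃ φ : ℕ → ℕ, StrictMono φ ∧ Tendsto (fun k => x (φ k)) atTop (𝓝 xbar))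
    (M q : ℝ) (hM : 0 < M) (hq : q ∈ Set.Ioo (1 / 2 : ℝ) 1)
    (hKL : ∃ η > (0 : ℝ), ∃ U ∈ 𝓝 xbar,
      ∀ y ∈ U, f xbar < f y → f y < f xbar + η →
        M * (f y - f xbar) ^ q ≤ ‖gradient f y‖) :
    ∃ c > (0 : ℝ), ∀ᶠ k in atTop,
      ‖x k - xbar‖ ≤ c * (k : ℝ) ^ (-(1 - q) / (2 * q - 1)) := by
  obtain ⟨hq1, hq2⟩ := hq
  obtain ⟨φ, hφm, hφt⟩ := hacc
  obtain ⟨η, hη, U, hUnhds, hKLU⟩ := hKL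
  obtain ⟨N₁, hN₁⟩ := eventually_atTop.mp (hdesc.and hgrad)
  set p : ℝ := 1 - q with hpdef
  set r : ℝ := 2 * q - 1 with hrdef
  have hp0 : 0 < p := by simp only [hpdef]; linarith
  have hp1 : p ≤ 1 := by simp only [hpdef]; linarith
  have hr0 : 0 < r := by simp only [hrdef]; linarith
  have hr1 : r ≤ 1 := by simp only [hrdef]; linarith
  set a : ℕ → ℝ := fun k => f (x k) - f xbar with hadef
  -- d k ≠ 0
  have hd0 : ∀ k, 0 < ‖d k‖ := by
    intro k
    rw [norm_pos_iff]
    intro h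
    exact hne k (by rw [hiter k, h, smul_zero, add_zero])
  have hφge : ∀ j, j ≤ φ j := fun j => hφm.le_apply
  -- descent in terms of a
  have hstep : ∀ k, N₁ ≤ k → α * ‖d k‖ ^ 2 ≤ a k - a (k + 1) := by
    intro k hk
    have := (hN₁ k hk).1
    simp only [hadef]
    linarith
  have hdec : ∀ k, N₁ ≤ k → a (k + 1) < a k := by
    intro k hk
    have h1 := hstep k hk
    have h2 : 0 < α * ‖d k‖ ^ 2 := mul_pos hα (pow_pos (hd0 k) 2)
    linarith
  have hmono : ∀ k, N₁ ≤ k → ∀ m, k ≤ m → a m ≤ a k := by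
    intro k hk m hm
    induction m, hm using Nat.le_induction with
    | base => exact le_refl _
    | succ m hm ih => exact le_trans (hdec m (le_trans hk hm)).le ih
  -- a along the subsequence tends to 0
  have haφ : Tendsto (fun j => a (φ j)) atTop (𝓝 0) := by
    have h1 : Tendsto (fun j => f (x (φ j))) atTop (𝓝 (f xbar)) :=
      (hf.continuous.tendsto xbar).comp hφt
    simpa [hadef] using h1.sub_const (f xbar)
  have hanonneg : ∀ k, N₁ ≤ k → 0 ≤ a k := by
    intro k hk
    refine le_of_tendsto haφ ?_
    filter_upwards [eventually_ge_atTop k] with j hj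
    exact hmono k hk (φ j) (le_trans hj (hφge j))
  have hapos : ∀ k, N₁ ≤ k → 0 < a k := by
    intro k hk
    exact lt_of_le_of_lt (hanonneg (k + 1) (by omega)) (hdec k hk)
  -- the KL neighborhood contains a ball
  obtain ⟨ε, hε, hball⟩ := Metric.mem_nhds_iff.mp hUnhds
  -- constants
  set K : ℝ := τ * (β / (p * α * M)) with hKdef
  have hK : 0 < K := by
    have : 0 < β / (p * α * M) := div_pos hβ (by positivity)
    positivity
  -- key one-step length estimate
  have hkey : ∀ j, N₁ ≤ j → x j ∈ U → a j < η →
      ‖x (j + 1) - x j‖ ≤ K * (a j ^ p - a (j + 1) ^ p) := by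
    intro j hj hjU hjη
    have hpos := hapos j hj
    have hdj := hd0 j
    have hKL' : M * a j ^ q ≤ ‖gradient f (x j)‖ := by
      have h1 : f xbar < f (x j) := by
        have := hpos; simp only [hadef] at this; linarith
      have h2 : f (x j) < f xbar + η := by
        simp only [hadef] at hjη; linarith
      exact hKLU (x j) hjU h1 h2
    have h1 : M * a j ^ q ≤ β * ‖d j‖ := le_trans hKL' (hN₁ j hj).2
    have haq : 0 < a j ^ q := Real.rpow_pos_of_pos hpos q
    set X : ℝ := (a j ^ q)⁻¹ with hXdef
    have hX0 : 0 < X := by positivity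
    -- concavity
    have hc := concave_rpow_ineq hp0.le hp1 hpos (hanonneg (j + 1) (by omega))
    have hpe : a j ^ (p - 1) = X := by
      rw [hXdef, ← Real.rpow_neg hpos.le]
      congr 1
      simp only [hpdef]; ring
    rw [hpe] at hc
    have hflip : p * X * (a (j + 1) - a j) = -(p * X * (a j - a (j + 1))) := by ring
    have hcon : p * X * (a j - a (j + 1)) ≤ a j ^ p - a (j + 1) ^ p := by
      rw [hflip] at hc; linarith
    -- lower bound on X
    have hX : M / (β * ‖d j‖) ≤ X := by
      rw [hXdef, inv_eq_one_div, div_le_div_iff₀ (by positivity) haq]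
      linarith
    -- chain of inequalities
    have s1 : (p * X) * (α * ‖d j‖ ^ 2) ≤ (p * X) * (a j - a (j + 1)) :=
      mul_le_mul_of_nonneg_left (hstep j hj) (by positivity)
    have s2 : (p * (M / (β * ‖d j‖))) * (α * ‖d j‖ ^ 2) ≤ (p * X) * (α * ‖d j‖ ^ 2) :=
      mul_le_mul_of_nonneg_right
        (mul_le_mul_of_nonneg_left hX hp0.le) (by positivity)
    have hD : (p * (M / (β * ‖d j‖))) * (α * ‖d j‖ ^ 2) ≤ a j ^ p - a (j + 1) ^ p := by
      calc (p * (M / (β * ‖d j‖))) * (α * ‖d j‖ ^ 2)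
          ≤ (p * X) * (α * ‖d j‖ ^ 2) := s2
        _ ≤ (p * X) * (a j - a (j + 1)) := s1
        _ ≤ a j ^ p - a (j + 1) ^ p := by
            have : p * X * (a j - a (j+1)) = (p * X) * (a j - a (j+1)) := by ring
            linarith [hcon]
    have hsimp : (p * (M / (β * ‖d j‖))) * (α * ‖d j‖ ^ 2) = ((p * M * α / β)) * ‖d j‖ := by
      field_simp
    rw [hsimp] at hD
    -- norm of the step
    have hnorm : ‖x (j + 1) - x j‖ = τ * ‖d j‖ := by
      rw [hiter j, add_sub_cancel_left, norm_smul, Real.norm_eq_abs, abs_of_pos hτ]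
    rw [hnorm]
    have hrecK : τ * ‖d j‖ = K * ((p * M * α / β) * ‖d j‖) := by
      rw [hKdef]
      field_simp
    rw [hrecK]
    exact mul_le_mul_of_nonneg_left hD hK.le
  -- choose the starting index k₀ = φ j₀
  have htend3 : Tendsto (fun j => ‖x (φ j) - xbar‖ + K * a (φ j) ^ p) atTop (𝓝 0) := by
    have t1 : Tendsto (fun j => ‖x (φ j) - xbar‖) atTop (𝓝 0) := by
      have := (hφt.sub_const xbar).norm
      simpa using this
    have t2 : Tendsto (fun j => a (φ j) ^ p) atTop (𝓝 0) := by
      have hc : ContinuousAt (fun t : ℝ => t ^ p) 0 :=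
        Real.continuousAt_rpow_const 0 p (Or.inr hp0.le)
      have := hc.tendsto.comp haφ
      simpa [Function.comp_def, Real.zero_rpow (ne_of_gt hp0)] using this
    have := t1.add (t2.const_mul K)
    simpa using this
  have hex : ∃ j₀, N₁ ≤ φ j₀ ∧ a (φ j₀) < η ∧ ‖x (φ j₀) - xbar‖ + K * a (φ j₀) ^ p < ε := by
    have e1 : ∀ᶠ j in atTop, N₁ ≤ φ j := by
      filter_upwards [eventually_ge_atTop N₁] with j hj
      exact le_trans hj (hφge j)
    have e2 : ∀ᶠ j in atTop, a (φ j) < η := by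
      have := haφ.eventually (eventually_lt_nhds hη)
      simpa using this
    have e3 : ∀ᶠ j in atTop, ‖x (φ j) - xbar‖ + K * a (φ j) ^ p < ε := by
      have := htend3.eventually (eventually_lt_nhds hε)
      simpa using this
    exact ((e1.and e2).and e3).exists.imp (fun j h => ⟨h.1.1, h.1.2, h.2⟩)
  obtain ⟨j₀, hk₀N, hk₀η, hk₀ε⟩ := hex
  set k₀ : ℕ := φ j₀ with hk₀def
  -- capture: all iterates from k₀ stay in the ball
  have hind : ∀ k, k₀ ≤ k → ‖x k - xbar‖ ≤ ‖x k₀ - xbar‖ + K * (a k₀ ^ p - a k ^ p) := by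
    intro k hk
    induction k, hk using Nat.le_induction with
    | base => simp
    | succ k hk ih =>
      have hkN : N₁ ≤ k := le_trans hk₀N hk
      have hak0 : 0 ≤ a k ^ p := Real.rpow_nonneg (hanonneg k hkN) p
      have hkball : ‖x k - xbar‖ < ε := by
        have : K * (a k₀ ^ p - a k ^ p) ≤ K * a k₀ ^ p :=
          mul_le_mul_of_nonneg_left (by linarith) hK.le
        linarith
      have hkU : x k ∈ U := hball (by rwa [Metric.mem_ball, dist_eq_norm])
      have hkη : a k < η := lt_of_le_of_lt (hmono k₀ hk₀N k hk) hk₀η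
      have hstep' := hkey k hkN hkU hkη
      have htri : ‖x (k + 1) - xbar‖ ≤ ‖x (k + 1) - x k‖ + ‖x k - xbar‖ :=
        norm_sub_le_norm_sub_add_norm_sub _ _ _
      calc ‖x (k + 1) - xbar‖ ≤ ‖x (k + 1) - x k‖ + ‖x k - xbar‖ := htri
        _ ≤ K * (a k ^ p - a (k + 1) ^ p) + (‖x k₀ - xbar‖ + K * (a k₀ ^ p - a k ^ p)) := by
            linarith
        _ = ‖x k₀ - xbar‖ + K * (a k₀ ^ p - a (k + 1) ^ p) := by ring
  have hU' : ∀ k, k₀ ≤ k → x k ∈ U := by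
    intro k hk
    have hkN : N₁ ≤ k := le_trans hk₀N hk
    have hak0 : 0 ≤ a k ^ p := Real.rpow_nonneg (hanonneg k hkN) p
    have : K * (a k₀ ^ p - a k ^ p) ≤ K * a k₀ ^ p :=
      mul_le_mul_of_nonneg_left (by linarith) hK.le
    have := hind k hk
    exact hball (by rw [Metric.mem_ball, dist_eq_norm]; linarith)
  -- two-point estimate
  have hseg : ∀ k, k₀ ≤ k → ∀ m, k ≤ m → ‖x m - x k‖ ≤ K * (a k ^ p - a m ^ p) := by
    intro k hk m hm
    induction m, hm using Nat.le_induction with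
    | base => simp
    | succ m hm ih =>
      have hmk₀ : k₀ ≤ m := le_trans hk hm
      have hmN : N₁ ≤ m := le_trans hk₀N hmk₀
      have hmU : x m ∈ U := hU' m hmk₀
      have hmη : a m < η := lt_of_le_of_lt (hmono k₀ hk₀N m hmk₀) hk₀η
      have hstep' := hkey m hmN hmU hmη
      calc ‖x (m + 1) - x k‖ ≤ ‖x (m + 1) - x m‖ + ‖x m - x k‖ :=
            norm_sub_le_norm_sub_add_norm_sub _ _ _
        _ ≤ K * (a m ^ p - a (m + 1) ^ p) + K * (a k ^ p - a m ^ p) := by linarith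
        _ = K * (a k ^ p - a (m + 1) ^ p) := by ring
  -- limit: distance to xbar is controlled by a k ^ p
  have hlim : ∀ k, k₀ ≤ k → ‖x k - xbar‖ ≤ K * a k ^ p := by
    intro k hk
    have h1 : Tendsto (fun j => ‖x (φ j) - x k‖) atTop (𝓝 ‖xbar - x k‖) := by
      have := (hφt.sub_const (x k)).norm
      exact this
    have h2 : ∀ᶠ j in atTop, ‖x (φ j) - x k‖ ≤ K * a k ^ p := by
      filter_upwards [eventually_ge_atTop k] with j hj
      have hjk : k ≤ φ j := le_trans hj (hφge j)
      have := hseg k hk (φ j) hjk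
      have hnn : 0 ≤ a (φ j) ^ p :=
        Real.rpow_nonneg (hanonneg (φ j) (le_trans (le_trans hk₀N hk) hjk)) p
      have : K * (a k ^ p - a (φ j) ^ p) ≤ K * a k ^ p :=
        mul_le_mul_of_nonneg_left (by linarith) hK.le
      linarith [hseg k hk (φ j) hjk]
    have := le_of_tendsto h1 h2
    rwa [norm_sub_rev] at this
  -- rate for a: per-step recursion for a ^ (-r)
  set C : ℝ := α * M ^ 2 / β ^ 2 with hCdef
  have hC : 0 < C := by positivity
  have hrecstep : ∀ k, k₀ ≤ k → r * C ≤ a (k + 1) ^ (-r) - a k ^ (-r) := by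
    intro k hk
    have hkN : N₁ ≤ k := le_trans hk₀N hk
    have hpos := hapos k hkN
    have hpos' := hapos (k + 1) (by omega)
    have hkU : x k ∈ U := hU' k hk
    have hkη : a k < η := lt_of_le_of_lt (hmono k₀ hk₀N k hk) hk₀η
    have hKL' : M * a k ^ q ≤ ‖gradient f (x k)‖ := by
      have h1 : f xbar < f (x k) := by have := hpos; simp only [hadef] at this; linarith
      have h2 : f (x k) < f xbar + η := by simp only [hadef] at hkη; linarith
      exact hKLU (x k) hkU h1 h2
    have h1 : M * a k ^ q ≤ β * ‖d k‖ := le_trans hKL' (hN₁ k hkN).2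
    have haq : 0 < a k ^ q := Real.rpow_pos_of_pos hpos q
    -- θ-descent: a k - a (k+1) ≥ C * a k ^ (2q) = C * (a k ^ q) ^ 2
    have hsq : (M * a k ^ q) ^ 2 ≤ (β * ‖d k‖) ^ 2 :=
      pow_le_pow_left₀ (by positivity) h1 2
    have hth : C * (a k ^ q) ^ 2 ≤ a k - a (k + 1) := by
      have h3 := hstep k hkN
      have hb2 : (0:ℝ) < β ^ 2 := by positivity
      have e1 : α * (M * a k ^ q) ^ 2 ≤ α * (β * ‖d k‖) ^ 2 :=
        mul_le_mul_of_nonneg_left hsq hα.le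
      have e0 : α * (M * a k ^ q) ^ 2 = α * M ^ 2 * (a k ^ q) ^ 2 := by ring
      have e2 : α * (β * ‖d k‖) ^ 2 = β ^ 2 * (α * ‖d k‖ ^ 2) := by ring
      have e3 : β ^ 2 * (α * ‖d k‖ ^ 2) ≤ β ^ 2 * (a k - a (k + 1)) :=
        mul_le_mul_of_nonneg_left h3 (by positivity)
      rw [hCdef, div_mul_eq_mul_div, div_le_iff₀ hb2]
      nlinarith [e1, e0, e2, e3]
    -- concavity with exponent r
    have hc := concave_rpow_ineq hr0.le hr1 hpos hpos'.le
    have hflip : r * a k ^ (r - 1) * (a (k + 1) - a k)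
        = -(r * a k ^ (r - 1) * (a k - a (k + 1))) := by ring
    rw [hflip] at hc
    have hcon : r * a k ^ (r - 1) * (a k - a (k + 1)) ≤ a k ^ r - a (k + 1) ^ r := by
      linarith
    have hrm1 : 0 < a k ^ (r - 1) := Real.rpow_pos_of_pos hpos _
    have hlow : r * a k ^ (r - 1) * (C * (a k ^ q) ^ 2) ≤ a k ^ r - a (k + 1) ^ r := by
      refine le_trans ?_ hcon
      exact mul_le_mul_of_nonneg_left hth (by positivity)
    -- a k ^ (r-1) * (a k ^ q)^2 = a k ^ (2r) = (a k ^ r)^2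
    have hexp : a k ^ (r - 1) * (a k ^ q) ^ 2 = (a k ^ r) ^ 2 := by
      rw [← Real.rpow_natCast (a k ^ q) 2, ← Real.rpow_natCast (a k ^ r) 2,
        ← Real.rpow_mul hpos.le, ← Real.rpow_mul hpos.le,
        ← Real.rpow_add hpos]
      congr 1
      push_cast
      simp only [hrdef]
      ring
    have hlow2 : r * C * (a k ^ r) ^ 2 ≤ a k ^ r - a (k + 1) ^ r := by
      have : r * a k ^ (r - 1) * (C * (a k ^ q) ^ 2)
          = r * C * (a k ^ (r - 1) * (a k ^ q) ^ 2) := by ring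
      rw [this, hexp] at hlow
      exact hlow
    set A : ℝ := a k ^ r with hAdef
    set B : ℝ := a (k + 1) ^ r with hBdef
    have hA : 0 < A := Real.rpow_pos_of_pos hpos r
    have hB : 0 < B := Real.rpow_pos_of_pos hpos' r
    have hBA : B ≤ A := Real.rpow_le_rpow hpos'.le (hdec k hkN).le hr0.le
    have hinv : a (k + 1) ^ (-r) - a k ^ (-r) = (A - B) / (A * B) := by
      rw [Real.rpow_neg hpos.le, Real.rpow_neg hpos'.le, ← hAdef, ← hBdef]
      field_simp
    rw [hinv, le_div_iff₀ (by positivity)]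
    have e1 : (r * C * A) * B ≤ (r * C * A) * A :=
      mul_le_mul_of_nonneg_left hBA (by positivity)
    have e2 : (r * C * A) * A = r * C * A ^ 2 := by ring
    have e3 : r * C * (A * B) = (r * C * A) * B := by ring
    linarith [hlow2]
  have hrate : ∀ m : ℕ, (r * C) * m ≤ a (k₀ + m) ^ (-r) := by
    intro m
    induction m with
    | zero =>
      simp only [Nat.cast_zero, mul_zero, add_zero]
      exact Real.rpow_nonneg (hanonneg k₀ hk₀N) _
    | succ m ih =>
      have := hrecstep (k₀ + m) (by omega)
      push_cast
      have heq : k₀ + (m + 1) = (k₀ + m) + 1 := by omega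
      rw [heq]
      push_cast at ih
      linarith
  -- final bound
  have hc2 : (0:ℝ) < r * C / 2 := by positivity
  refine ⟨K * (r * C / 2) ^ (-p / r),
    mul_pos hK (Real.rpow_pos_of_pos hc2 _), ?_⟩
  filter_upwards [eventually_ge_atTop (2 * (k₀ + 1))] with k hk
  have hkk₀ : k₀ ≤ k := by omega
  have hkN : N₁ ≤ k := le_trans hk₀N hkk₀
  have hak : 0 < a k := hapos k hkN
  set m : ℕ := k - k₀ with hmdef
  have hkm : k₀ + m = k := by omega
  have hm1 : 1 ≤ m := by omega
  have hmR : (0:ℝ) < (m:ℝ) := by exact_mod_cast hm1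
  have hkR : (0:ℝ) < (k:ℝ) := by
    have : 1 ≤ k := by omega
    exact_mod_cast Nat.lt_of_lt_of_le Nat.zero_lt_one this
  have hm2 : (k : ℝ) / 2 ≤ (m : ℝ) := by
    have h2m : k ≤ 2 * m := by omega
    have : (k : ℝ) ≤ 2 * (m : ℝ) := by exact_mod_cast h2m
    linarith
  have h1 : (r * C) * m ≤ a k ^ (-r) := by
    have := hrate m
    rwa [hkm] at this
  have hmpos : (0:ℝ) < (r * C) * m := mul_pos (mul_pos hr0 hC) hmR
  have hkpos : (0:ℝ) < (r * C / 2) * k := mul_pos hc2 hkR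
  have hnp : -(1 / r) ≤ (0:ℝ) := by
    have : (0:ℝ) < 1 / r := by positivity
    linarith
  have h2 : a k ≤ ((r * C) * m) ^ (-(1 / r)) := by
    have hmon := Real.rpow_le_rpow_of_nonpos hmpos h1 hnp
    have hid : (a k ^ (-r)) ^ (-(1 / r)) = a k := by
      rw [← Real.rpow_mul hak.le]
      have : -r * -(1 / r) = 1 := by field_simp
      rw [this, Real.rpow_one]
    rwa [hid] at hmon
  have h3 : ((r * C) * m) ^ (-(1 / r)) ≤ ((r * C / 2) * k) ^ (-(1 / r)) := by
    refine Real.rpow_le_rpow_of_nonpos hkpos ?_ hnp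
    have := mul_le_mul_of_nonneg_left hm2 (mul_pos hr0 hC).le
    calc (r * C / 2) * k = (r * C) * ((k:ℝ) / 2) := by ring
      _ ≤ (r * C) * m := this
  have h4 : a k ^ p ≤ (((r * C / 2) * k) ^ (-(1 / r))) ^ p :=
    Real.rpow_le_rpow hak.le (h2.trans h3) hp0.le
  have h5 : (((r * C / 2) * k) ^ (-(1 / r))) ^ p = ((r * C / 2) * k) ^ (-p / r) := by
    rw [← Real.rpow_mul hkpos.le]
    congr 1
    ring
  have h6 : ((r * C / 2) * k) ^ (-p / r) = (r * C / 2) ^ (-p / r) * (k:ℝ) ^ (-p / r) :=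
    Real.mul_rpow hc2.le (Nat.cast_nonneg k)
  have h7 : ‖x k - xbar‖ ≤ K * a k ^ p := hlim k hkk₀
  calc ‖x k - xbar‖ ≤ K * a k ^ p := h7
    _ ≤ K * ((r * C / 2) ^ (-p / r) * (k:ℝ) ^ (-p / r)) := by
        refine mul_le_mul_of_nonneg_left ?_ hK.le
        rw [← h6, ← h5]
        exact h4
    _ = K * (r * C / 2) ^ (-p / r) * (k:ℝ) ^ (-p / r) := by ring
end

section
/- Let f : ℝⁿ → ℝ be a C¹-smooth function whose gradient is Lipschitz continuous on ℝⁿ with constant L > 0, let ν ≥ 0, and let x, g ∈ ℝⁿ satisfy ‖g − ∇f(x)‖ ≤ ν‖g‖. Then for x⁺ := x − (1/L)g one has f(x⁺) ≤ f(x) − ((1 − 2ν)/(2L))‖g‖². -/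
open Filter Topology

open scoped RealInnerProductSpace

private lemma descent_lemma {n : ℕ}
    (f : EuclideanSpace ℝ (Fin n) → ℝ) (hf : ContDiff ℝ 1 f)
    (L : ℝ) (hL : 0 < L)
    (hlip : ∀ x y : EuclideanSpace ℝ (Fin n),
      ‖gradient f x - gradient f y‖ ≤ L * ‖x - y‖)
    (x v : EuclideanSpace ℝ (Fin n)) :
    f (x + v) ≤ f x + ⟪gradient f x, v⟫ + L / 2 * ‖v‖ ^ 2 := by
  have hdiff : Differentiable ℝ f := hf.differentiable one_ne_zero
  set φ : ℝ → ℝ := fun t =>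
    f (x + t • v) - t * ⟪gradient f x, v⟫ - L * t ^ 2 / 2 * ‖v‖ ^ 2 with hφ
  have hderiv : ∀ t : ℝ, HasDerivAt φ
      (⟪gradient f (x + t • v), v⟫ - ⟪gradient f x, v⟫ - L * t * ‖v‖ ^ 2) t := by
    intro t
    have hline : HasDerivAt (fun t : ℝ => x + t • v) v t := by
      simpa using ((hasDerivAt_id t).smul_const v).const_add x
    have hgrad := (hdiff (x + t • v)).hasGradientAt
    have hF : HasFDerivAt f (InnerProductSpace.toDual ℝ _ (gradient f (x + t • v)))
        (x + t • v) := hgrad.hasFDerivAt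
    have h1 : HasDerivAt (fun t : ℝ => f (x + t • v))
        ⟪gradient f (x + t • v), v⟫ t := by
      exact (hF.comp_hasDerivAt t hline).congr_deriv InnerProductSpace.toDual_apply_apply
    have h2 : HasDerivAt (fun t : ℝ => t * ⟪gradient f x, v⟫)
        ⟪gradient f x, v⟫ t := by
      simpa using (hasDerivAt_id t).mul_const ⟪gradient f x, v⟫
    have h3 : HasDerivAt (fun t : ℝ => L * t ^ 2 / 2 * ‖v‖ ^ 2)
        (L * t * ‖v‖ ^ 2) t := by
      have := ((hasDerivAt_pow 2 t).const_mul L).div_const 2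
      have := this.mul_const (‖v‖ ^ 2)
      exact this.congr_deriv (by ring)
    exact (h1.sub h2).sub h3
  have hanti : AntitoneOn φ (Set.Icc 0 1) := by
    apply antitoneOn_of_deriv_nonpos (convex_Icc 0 1)
    · exact fun s _ => (hderiv s).continuousAt.continuousWithinAt
    · exact fun t _ => (hderiv t).differentiableAt.differentiableWithinAt
    · intro t ht
      rw [interior_Icc] at ht
      rw [(hderiv t).deriv]
      have hcs : ⟪gradient f (x + t • v) - gradient f x, v⟫ ≤
          ‖gradient f (x + t • v) - gradient f x‖ * ‖v‖ :=
        real_inner_le_norm _ _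
      have hl := hlip (x + t • v) x
      have h4 : ‖x + t • v - x‖ = t * ‖v‖ := by
        rw [add_sub_cancel_left, norm_smul, Real.norm_eq_abs, abs_of_pos ht.1]
      rw [h4] at hl
      have h5 : ⟪gradient f (x + t • v) - gradient f x, v⟫ =
          ⟪gradient f (x + t • v), v⟫ - ⟪gradient f x, v⟫ := inner_sub_left _ _ _
      nlinarith [norm_nonneg v, mul_le_mul_of_nonneg_right hl (norm_nonneg v)]
  have h01 := hanti (Set.mem_Icc.2 ⟨le_rfl, zero_le_one⟩)
    (Set.mem_Icc.2 ⟨zero_le_one, le_rfl⟩) zero_le_one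
  simp only [hφ, zero_smul, add_zero, one_smul, zero_mul, sub_zero, one_pow, mul_one,
    zero_pow, mul_zero, zero_div] at h01
  linarith

/-- One-step decrease of an inexact gradient step under the
relative-error condition ‖g − ∇f(x)‖ ≤ ν‖g‖. -/
theorem inexact_gradient_step_decrease {n : ℕ}
    (f : EuclideanSpace ℝ (Fin n) → ℝ) (hf : ContDiff ℝ 1 f)
    (L : ℝ) (hL : 0 < L)
    (hlip : ∀ x y : EuclideanSpace ℝ (Fin n),
      ‖gradient f x - gradient f y‖ ≤ L * ‖x - y‖)
    (ν : ℝ) (hν : 0 ≤ ν)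
    (x g : EuclideanSpace ℝ (Fin n))
    (herr : ‖g - gradient f x‖ ≤ ν * ‖g‖) :
    f (x - (1 / L) • g) ≤ f x - (1 - 2 * ν) / (2 * L) * ‖g‖ ^ 2 := by
  have hkey := descent_lemma f hf L hL hlip x (-((1 / L) • g))
  rw [← sub_eq_add_neg] at hkey
  have h1 : ⟪gradient f x, -((1 / L) • g)⟫ = -(1 / L) * ⟪gradient f x, g⟫ := by
    rw [inner_neg_right, real_inner_smul_right]; ring
  have h2 : ‖-((1 / L) • g)‖ ^ 2 = (1 / L) ^ 2 * ‖g‖ ^ 2 := by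
    rw [norm_neg, norm_smul, Real.norm_eq_abs, mul_pow, sq_abs]
  rw [h1, h2] at hkey
  have h3 : ⟪gradient f x, g⟫ = ‖g‖ ^ 2 - ⟪g - gradient f x, g⟫ := by
    rw [inner_sub_left, real_inner_self_eq_norm_sq]; ring
  have h4 : ⟪g - gradient f x, g⟫ ≤ ν * ‖g‖ ^ 2 := by
    calc ⟪g - gradient f x, g⟫ ≤ ‖g - gradient f x‖ * ‖g‖ := real_inner_le_norm _ _
      _ ≤ ν * ‖g‖ * ‖g‖ := mul_le_mul_of_nonneg_right herr (norm_nonneg _)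
      _ = ν * ‖g‖ ^ 2 := by ring
  have hL' : (0:ℝ) < 1 / L := by positivity
  have : f (x - (1 / L) • g) ≤ f x + -(1 / L) * (‖g‖ ^ 2 - ν * ‖g‖ ^ 2)
      + L / 2 * ((1 / L) ^ 2 * ‖g‖ ^ 2) := by
    nlinarith [hkey, h3, h4]
  have heq : f x + -(1 / L) * (‖g‖ ^ 2 - ν * ‖g‖ ^ 2) + L / 2 * ((1 / L) ^ 2 * ‖g‖ ^ 2)
      = f x - (1 - 2 * ν) / (2 * L) * ‖g‖ ^ 2 := by
    field_simp
    ring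
  linarith [heq ▸ this]
end

section
/- Let f : ℝⁿ → ℝ be a C¹-smooth function whose gradient is Lipschitz continuous with constant L > 0, and let {x^k}, {g^k} ⊂ ℝⁿ satisfy x^{k+1} = x^k − (1/L)g^k and ‖g^k − ∇f(x^k)‖ ≤ ν‖g^k‖ for all k, where 0 ≤ ν < 1/2. Assume that ∇f(x^k) ≠ 0 for all k and that {x^k} has an accumulation point. Then both ∇f(x^k) → 0 and g^k → 0 as k → ∞. -/
open Filter Topology intervalIntegral

lemma inner_gradient_eq {n : ℕ} (f : EuclideanSpace ℝ (Fin n) → ℝ)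
    (y v : EuclideanSpace ℝ (Fin n)) :
    inner ℝ (gradient f y) v = fderiv ℝ f y v := by
  rw [gradient]
  exact InnerProductSpace.toDual_symm_apply

lemma descent_aux {n : ℕ} (f : EuclideanSpace ℝ (Fin n) → ℝ) (hf : ContDiff ℝ 1 f)
    (L : ℝ) (hL : 0 < L)
    (hlip : ∀ x y : EuclideanSpace ℝ (Fin n),
      ‖gradient f x - gradient f y‖ ≤ L * ‖x - y‖)
    (x v : EuclideanSpace ℝ (Fin n)) :
    f (x + v) ≤ f x + inner ℝ (gradient f x) v + L / 2 * ‖v‖ ^ 2 := by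
  have hdiff : ∀ y, DifferentiableAt ℝ f y :=
    fun y => (hf.differentiable one_ne_zero).differentiableAt
  have hφ' : ∀ t : ℝ, HasDerivAt (fun t : ℝ => f (x + t • v))
      (inner ℝ (gradient f (x + t • v)) v : ℝ) t := by
    intro t
    have h2 : HasDerivAt (fun t : ℝ => x + t • v) v t := by
      simpa using ((hasDerivAt_id t).smul_const v).const_add x
    have h3 := (hdiff (x + t • v)).hasFDerivAt.comp_hasDerivAt t h2
    rw [inner_gradient_eq]
    exact h3
  have hgcont : Continuous fun y => gradient f y := by
    have h1 : Continuous fun y => fderiv ℝ f y := hf.continuous_fderiv one_ne_zero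
    have : Continuous fun y => (InnerProductSpace.toDual ℝ (EuclideanSpace ℝ (Fin n))).symm
        (fderiv ℝ f y) :=
      (InnerProductSpace.toDual ℝ _).symm.continuous.comp h1
    exact this
  have hcont : Continuous fun t : ℝ => (inner ℝ (gradient f (x + t • v)) v : ℝ) := by
    apply Continuous.inner
    · exact hgcont.comp (continuous_const.add (continuous_id.smul continuous_const))
    · exact continuous_const
  have hint : IntervalIntegrable (fun t : ℝ => (inner ℝ (gradient f (x + t • v)) v : ℝ))
      MeasureTheory.volume 0 1 := hcont.intervalIntegrable 0 1
  have hftc : ∫ t in (0:ℝ)..1, (inner ℝ (gradient f (x + t • v)) v : ℝ)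
      = f (x + v) - f x := by
    have := intervalIntegral.integral_eq_sub_of_hasDerivAt
      (fun t _ => hφ' t) hint
    simpa using this
  have hbound : ∀ t ∈ Set.Icc (0:ℝ) 1,
      (inner ℝ (gradient f (x + t • v)) v : ℝ) ≤ inner ℝ (gradient f x) v + L * ‖v‖ ^ 2 * t := by
    intro t ht
    have h1 : (inner ℝ (gradient f (x + t • v)) v : ℝ) - inner ℝ (gradient f x) v
        = inner ℝ (gradient f (x + t • v) - gradient f x) v := by
      rw [inner_sub_left]
    have h2 : (inner ℝ (gradient f (x + t • v) - gradient f x) v : ℝ)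
        ≤ ‖gradient f (x + t • v) - gradient f x‖ * ‖v‖ := real_inner_le_norm _ _
    have h3 : ‖gradient f (x + t • v) - gradient f x‖ ≤ L * (t * ‖v‖) := by
      have := hlip (x + t • v) x
      simpa [norm_smul, abs_of_nonneg ht.1] using this
    nlinarith [norm_nonneg v, mul_le_mul_of_nonneg_right h3 (norm_nonneg v)]
  have hintle : ∫ t in (0:ℝ)..1, (inner ℝ (gradient f (x + t • v)) v : ℝ)
      ≤ ∫ t in (0:ℝ)..1, (inner ℝ (gradient f x) v + L * ‖v‖ ^ 2 * t) := by
    apply intervalIntegral.integral_mono_on (by norm_num) hint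
    · exact (continuous_const.add ((continuous_const.mul continuous_id))).intervalIntegrable 0 1
    · exact hbound
  have hrhs : ∫ t in (0:ℝ)..1, (inner ℝ (gradient f x) v + L * ‖v‖ ^ 2 * t)
      = inner ℝ (gradient f x) v + L / 2 * ‖v‖ ^ 2 := by
    have hi2 : IntervalIntegrable (fun t : ℝ => L * ‖v‖ ^ 2 * t) MeasureTheory.volume 0 1 := by
      exact (continuous_const.mul continuous_id).intervalIntegrable 0 1
    rw [intervalIntegral.integral_add intervalIntegrable_const hi2,
      intervalIntegral.integral_const_mul, integral_id, intervalIntegral.integral_const]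
    norm_num
    ring
  rw [hftc, hrhs] at hintle
  linarith [hintle]


/-- Convergence to zero of the gradient sequence and of the
inexact gradient sequence for the inexact gradient method. -/
theorem inexact_gradient_method_gradients_to_zero {n : ℕ}
    (f : EuclideanSpace ℝ (Fin n) → ℝ) (hf : ContDiff ℝ 1 f)
    (L : ℝ) (hL : 0 < L)
    (hlip : ∀ x y : EuclideanSpace ℝ (Fin n),
      ‖gradient f x - gradient f y‖ ≤ L * ‖x - y‖)
    (x g : ℕ → EuclideanSpace ℝ (Fin n)) (ν : ℝ) (hν0 : 0 ≤ ν) (hν : ν < 1 / 2)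
    (hiter : ∀ k : ℕ, x (k + 1) = x k - (1 / L) • g k)
    (herr : ∀ k : ℕ, ‖g k - gradient f (x k)‖ ≤ ν * ‖g k‖)
    (hgrad : ∀ k : ℕ, gradient f (x k) ≠ 0)
    (hacc : ∃ xbar : EuclideanSpace ℝ (Fin n), ∃ φ : ℕ → ℕ,
      StrictMono φ ∧ Tendsto (fun k => x (φ k)) atTop (𝓝 xbar)) :
    Tendsto (fun k => gradient f (x k)) atTop (𝓝 0) ∧
      Tendsto g atTop (𝓝 0) := by
  set c : ℝ := (1 / 2 - ν) / L with hc
  have hcpos : 0 < c := div_pos (by linarith) hL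
  -- key descent inequality
  have key : ∀ k : ℕ, f (x (k + 1)) + c * ‖g k‖ ^ 2 ≤ f (x k) := by
    intro k
    have hx1 : x (k + 1) = x k + (-(1 / L)) • g k := by
      rw [hiter k, sub_eq_add_neg, neg_smul]
    have hd := descent_aux f hf L hL hlip (x k) ((-(1 / L)) • g k)
    rw [← hx1] at hd
    have hin : (inner ℝ (gradient f (x k)) ((-(1 / L)) • g k) : ℝ)
        = (-(1 / L)) * inner ℝ (gradient f (x k)) (g k) := real_inner_smul_right _ _ _
    have hnv : ‖(-(1 / L)) • g k‖ ^ 2 = (1 / L) ^ 2 * ‖g k‖ ^ 2 := by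
      rw [norm_smul]
      rw [norm_neg, Real.norm_eq_abs, abs_of_nonneg (le_of_lt (one_div_pos.mpr hL))]
      ring
    -- inner product lower bound
    have hip : (1 - ν) * ‖g k‖ ^ 2 ≤ inner ℝ (gradient f (x k)) (g k) := by
      have h1 : (inner ℝ (g k - gradient f (x k)) (g k) : ℝ)
          ≤ ‖g k - gradient f (x k)‖ * ‖g k‖ := real_inner_le_norm _ _
      have h2 : ‖g k - gradient f (x k)‖ * ‖g k‖ ≤ ν * ‖g k‖ * ‖g k‖ :=
        mul_le_mul_of_nonneg_right (herr k) (norm_nonneg _)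
      have h3 : (inner ℝ (g k - gradient f (x k)) (g k) : ℝ)
          = ‖g k‖ ^ 2 - inner ℝ (gradient f (x k)) (g k) := by
        rw [inner_sub_left, real_inner_self_eq_norm_sq]
      nlinarith
    have hL2 : (0:ℝ) < 1 / L := one_div_pos.mpr hL
    rw [hin, hnv] at hd
    have : f (x (k + 1)) ≤ f (x k) - (1 / L) * ((1 - ν) * ‖g k‖ ^ 2)
        + L / 2 * ((1 / L) ^ 2 * ‖g k‖ ^ 2) := by
      have := mul_le_mul_of_nonneg_left hip (le_of_lt hL2)
      linarith
    have hLc : (1 / L) * (1 - ν) - L / 2 * (1 / L) ^ 2 = c := by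
      field_simp [hc]
      rw [hc]; field_simp <;> ring
    nlinarith [this, sq_nonneg ‖g k‖]
  have hanti : Antitone fun k => f (x k) := by
    apply antitone_nat_of_succ_le
    intro k
    have := key k
    nlinarith [sq_nonneg ‖g k‖, mul_nonneg hcpos.le (sq_nonneg ‖g k‖)]
  obtain ⟨xbar, φ, hφ, hxφ⟩ := hacc
  have hfc : Continuous f := hf.continuous
  have hsub : Tendsto (fun k => f (x (φ k))) atTop (𝓝 (f xbar)) :=
    (hfc.tendsto xbar).comp hxφ
  have hconv : Tendsto (fun k => f (x k)) atTop (𝓝 (f xbar)) := by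
    rcases tendsto_of_antitone hanti with hbot | ⟨l, hl⟩
    · exact absurd (hbot.comp hφ.tendsto_atTop)
        (not_tendsto_atBot_of_tendsto_nhds hsub)
    · have : Tendsto (fun k => f (x (φ k))) atTop (𝓝 l) := hl.comp hφ.tendsto_atTop
      rwa [tendsto_nhds_unique this hsub] at hl
  have hdiff0 : Tendsto (fun k => f (x k) - f (x (k + 1))) atTop (𝓝 0) := by
    have h2 : Tendsto (fun k => f (x (k + 1))) atTop (𝓝 (f xbar)) :=
      hconv.comp (tendsto_add_atTop_nat 1)
    simpa using hconv.sub h2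
  have hgsq : Tendsto (fun k => ‖g k‖ ^ 2) atTop (𝓝 0) := by
    apply squeeze_zero (fun k => sq_nonneg _) (fun k => ?_)
      (by simpa using hdiff0.const_mul (1 / c))
    have := key k
    have h2 : c * ‖g k‖ ^ 2 ≤ f (x k) - f (x (k + 1)) := by linarith
    calc ‖g k‖ ^ 2 = c⁻¹ * (c * ‖g k‖ ^ 2) := by field_simp
      _ ≤ c⁻¹ * (f (x k) - f (x (k + 1))) :=
        mul_le_mul_of_nonneg_left h2 (inv_nonneg.mpr hcpos.le)
  have hgn : Tendsto (fun k => ‖g k‖) atTop (𝓝 0) := by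
    have := (Real.continuous_sqrt.tendsto 0).comp hgsq
    have heq : ((fun x => Real.sqrt x) ∘ fun k => ‖g k‖ ^ 2) = fun k => ‖g k‖ := by
      funext k
      simp [Function.comp, Real.sqrt_sq (norm_nonneg _)]
    rw [heq] at this
    simpa using this
  have hg0 : Tendsto g atTop (𝓝 0) := tendsto_zero_iff_norm_tendsto_zero.mpr hgn
  refine ⟨?_, hg0⟩
  rw [tendsto_zero_iff_norm_tendsto_zero]
  apply squeeze_zero (fun k => norm_nonneg _) (fun k => ?_)
    (by simpa using hgn.const_mul (1 + ν))
  have h1 : ‖gradient f (x k)‖ ≤ ‖g k - gradient f (x k)‖ + ‖g k‖ := by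
    have := norm_sub_norm_le (g k - gradient f (x k)) (g k)
    have h2 := norm_sub_le (g k) (g k - gradient f (x k))
    calc ‖gradient f (x k)‖ = ‖g k - (g k - gradient f (x k))‖ := by rw [sub_sub_cancel]
      _ ≤ ‖g k‖ + ‖g k - gradient f (x k)‖ := norm_sub_le _ _
      _ = ‖g k - gradient f (x k)‖ + ‖g k‖ := by ring
  calc ‖gradient f (x k)‖ ≤ ν * ‖g k‖ + ‖g k‖ := le_trans h1 (by linarith [herr k])
    _ = (1 + ν) * ‖g k‖ := by ring
end

section
/- Let f : ℝⁿ → ℝ be a C¹-smooth function whose gradient is Lipschitz continuous with constant L > 0, and let {x^k}, {g^k} ⊂ ℝⁿ satisfy x^{k+1} = x^k − (1/L)g^k and ‖g^k − ∇f(x^k)‖ ≤ ν‖g^k‖ for all k, where 0 ≤ ν < 1/2. Assume that ∇f(x^k) ≠ 0 for all k, that x̄ is an accumulation point of {x^k}, and that f satisfies the KL property at x̄ with ψ(t) = M t^q for some M > 0 and q ∈ (0, 1/2]. Then the sequences {x^k}, {f(x^k)}, and {∇f(x^k)} converge linearly to x̄, f(x̄), and 0 respectively: there exist c > 0 and ρ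 ∈ (0,1) such that ‖x^k − x̄‖ ≤ c ρ^k, 0 ≤ f(x^k) − f(x̄) ≤ c ρ^k, and ‖∇f(x^k)‖ ≤ c ρ^k for all k. -/
set_option maxHeartbeats 1600000

open Filter Topology

open RealInnerProductSpace

lemma igm_descent {n : ℕ} (f : EuclideanSpace ℝ (Fin n) → ℝ) (hf : ContDiff ℝ 1 f)
    (L : ℝ) (hL : 0 < L)
    (hlip : ∀ x y : EuclideanSpace ℝ (Fin n), ‖gradient f x - gradient f y‖ ≤ L * ‖x - y‖)
    (x y : EuclideanSpace ℝ (Fin n)) :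
    f y ≤ f x + ⟪gradient f x, y - x⟫ + L / 2 * ‖y - x‖ ^ 2 := by
  set v := y - x with hv
  have hdiff : ∀ z, DifferentiableAt ℝ f z := fun z => (hf.differentiable one_ne_zero) z
  have hF : ∀ z : EuclideanSpace ℝ (Fin n),
      HasFDerivAt f ((InnerProductSpace.toDual ℝ _) (gradient f z)) z := fun z =>
    hasGradientAt_iff_hasFDerivAt.mp (hdiff z).hasGradientAt
  have hcurve : ∀ t : ℝ, HasDerivAt (fun t : ℝ => x + t • v) v t := by
    intro t
    simpa using ((hasDerivAt_id t).smul_const v).const_add x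
  have hphi : ∀ t : ℝ, HasDerivAt (fun t => f (x + t • v)) ⟪gradient f (x + t • v), v⟫ t := by
    intro t
    have := (hF (x + t • v)).comp_hasDerivAt t (hcurve t)
    simpa [InnerProductSpace.toDual_apply_apply, Function.comp_def] using this
  set h : ℝ → ℝ := fun t => f (x + t • v) - t * ⟪gradient f x, v⟫ - L / 2 * t ^ 2 * ‖v‖ ^ 2
    with hhdef
  have hh : ∀ t : ℝ, HasDerivAt h
      (⟪gradient f (x + t • v), v⟫ - ⟪gradient f x, v⟫ - L * t * ‖v‖ ^ 2) t := by
    intro t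
    have h1 : HasDerivAt (fun t : ℝ => t * ⟪gradient f x, v⟫) ⟪gradient f x, v⟫ t := by
      simpa using (hasDerivAt_id t).mul_const (⟪gradient f x, v⟫)
    have h2 : HasDerivAt (fun t : ℝ => L / 2 * t ^ 2 * ‖v‖ ^ 2) (L * t * ‖v‖ ^ 2) t := by
      have := ((hasDerivAt_pow 2 t).const_mul (L / 2)).mul_const (‖v‖ ^ 2)
      exact this.congr_deriv (by rw [show (2 - 1 : ℕ) = 1 from rfl]; push_cast; ring)
    exact ((hphi t).sub h1).sub h2
  have hmono : AntitoneOn h (Set.Icc 0 1) := by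
    apply antitoneOn_of_deriv_nonpos (convex_Icc 0 1)
    · exact fun t _ => ((hh t).differentiableAt.continuousAt).continuousWithinAt
    · exact fun t _ => (hh t).differentiableAt.differentiableWithinAt
    · intro t ht
      rw [interior_Icc] at ht
      rw [(hh t).deriv]
      have e1 : ⟪gradient f (x + t • v), v⟫ - ⟪gradient f x, v⟫
          = ⟪gradient f (x + t • v) - gradient f x, v⟫ := by
        rw [inner_sub_left]
      have e2 : ⟪gradient f (x + t • v) - gradient f x, v⟫
          ≤ ‖gradient f (x + t • v) - gradient f x‖ * ‖v‖ := real_inner_le_norm _ _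
      have e3 : ‖gradient f (x + t • v) - gradient f x‖ ≤ L * ‖t • v‖ := by
        simpa using hlip (x + t • v) x
      have e4 : ‖t • v‖ = t * ‖v‖ := by
        rw [norm_smul, Real.norm_eq_abs, abs_of_pos ht.1]
      have e5 : ‖gradient f (x + t • v) - gradient f x‖ * ‖v‖ ≤ L * t * ‖v‖ ^ 2 := by
        have h' := mul_le_mul_of_nonneg_right e3 (norm_nonneg v)
        rw [e4] at h'
        have : L * (t * ‖v‖) * ‖v‖ = L * t * ‖v‖ ^ 2 := by ring
        linarith
      linarith [e1, e2, e5]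
  have h10 : h 1 ≤ h 0 := hmono (Set.left_mem_Icc.mpr zero_le_one)
    (Set.right_mem_Icc.mpr zero_le_one) zero_le_one
  have h0 : h 0 = f x := by simp [hhdef]
  have h1 : h 1 = f y - ⟪gradient f x, v⟫ - L / 2 * ‖v‖ ^ 2 := by
    simp [hhdef, hv]
  rw [h0, h1] at h10
  linarith

lemma igm_suffdec {n : ℕ} (f : EuclideanSpace ℝ (Fin n) → ℝ) (hf : ContDiff ℝ 1 f)
    (L : ℝ) (hL : 0 < L)
    (hlip : ∀ x y : EuclideanSpace ℝ (Fin n), ‖gradient f x - gradient f y‖ ≤ L * ‖x - y‖)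
    (ν : ℝ) (hν0 : 0 ≤ ν)
    (xk g : EuclideanSpace ℝ (Fin n)) (herr : ‖g - gradient f xk‖ ≤ ν * ‖g‖) :
    f (xk - (1 / L) • g) ≤ f xk - (1 - 2 * ν) / (2 * L) * ‖g‖ ^ 2 := by
  have hd := igm_descent f hf L hL hlip xk (xk - (1 / L) • g)
  have hvy : xk - (1 / L) • g - xk = -((1 / L) • g) := by abel
  rw [hvy] at hd
  have hip : ⟪gradient f xk, -((1 / L) • g)⟫ = -(1 / L) * ⟪gradient f xk, g⟫ := by
    rw [inner_neg_right, real_inner_smul_right]; ring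
  have hnm : ‖-((1 / L) • g)‖ ^ 2 = (1 / L) ^ 2 * ‖g‖ ^ 2 := by
    rw [norm_neg, norm_smul, Real.norm_eq_abs, abs_of_pos (by positivity : (0:ℝ) < 1 / L)]
    ring
  have hlow : (1 - ν) * ‖g‖ ^ 2 ≤ ⟪gradient f xk, g⟫ := by
    have e1 : ⟪gradient f xk, g⟫ = ⟪g, g⟫ - ⟪g - gradient f xk, g⟫ := by
      rw [inner_sub_left]; ring
    have e2 : ⟪g - gradient f xk, g⟫ ≤ ‖g - gradient f xk‖ * ‖g‖ := real_inner_le_norm _ _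
    have e3 : ‖g - gradient f xk‖ * ‖g‖ ≤ ν * ‖g‖ * ‖g‖ :=
      mul_le_mul_of_nonneg_right herr (norm_nonneg g)
    have e4 : ⟪g, g⟫ = ‖g‖ ^ 2 := real_inner_self_eq_norm_sq g
    nlinarith
  rw [hip, hnm] at hd
  have key : -(1 / L) * ⟪gradient f xk, g⟫ + L / 2 * ((1 / L) ^ 2 * ‖g‖ ^ 2)
      ≤ -((1 - 2 * ν) / (2 * L) * ‖g‖ ^ 2) := by
    have h1 : -(1 / L) * ⟪gradient f xk, g⟫ ≤ -(1 / L) * ((1 - ν) * ‖g‖ ^ 2) := by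
      have := mul_le_mul_of_nonneg_left hlow (by positivity : (0:ℝ) ≤ 1 / L)
      linarith
    have h2 : -(1 / L) * ((1 - ν) * ‖g‖ ^ 2) + L / 2 * ((1 / L) ^ 2 * ‖g‖ ^ 2)
        = -((1 - 2 * ν) / (2 * L) * ‖g‖ ^ 2) := by
      field_simp
      ring
    linarith
  linarith

lemma igm_geom {θ : ℝ} (h0 : 0 ≤ θ) (h1 : θ < 1) (m : ℕ) :
    ∑ j ∈ Finset.range m, θ ^ j ≤ (1 - θ)⁻¹ := by
  have := Summable.sum_le_tsum (Finset.range m) (fun i _ => pow_nonneg h0 i)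
    (summable_geometric_of_lt_one h0 h1)
  rwa [tsum_geometric_of_lt_one h0 h1] at this

lemma igm_sqrt_pow {ρ : ℝ} (h0 : 0 ≤ ρ) (m : ℕ) :
    Real.sqrt (ρ ^ m) = (Real.sqrt ρ) ^ m := by
  induction m with
  | zero => simp
  | succ k ih => rw [pow_succ, pow_succ, Real.sqrt_mul (pow_nonneg h0 k), ih]

/-- Linear convergence of iterates, function values, and gradients
for the inexact gradient method under the KL property with q ∈ (0, 1/2]. -/
theorem inexact_gradient_method_linear_rates {n : ℕ}
    (f : EuclideanSpace ℝ (Fin n) → ℝ) (hf : ContDiff ℝ 1 f)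
    (L : ℝ) (hL : 0 < L)
    (hlip : ∀ x y : EuclideanSpace ℝ (Fin n),
      ‖gradient f x - gradient f y‖ ≤ L * ‖x - y‖)
    (x g : ℕ → EuclideanSpace ℝ (Fin n)) (ν : ℝ) (hν0 : 0 ≤ ν) (hν : ν < 1 / 2)
    (hiter : ∀ k : ℕ, x (k + 1) = x k - (1 / L) • g k)
    (herr : ∀ k : ℕ, ‖g k - gradient f (x k)‖ ≤ ν * ‖g k‖)
    (hgrad : ∀ k : ℕ, gradient f (x k) ≠ 0)
    (xbar : EuclideanSpace ℝ (Fin n))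
    (hacc : ∃ φ : ℕ → ℕ, StrictMono φ ∧ Tendsto (fun k => x (φ k)) atTop (𝓝 xbar))
    (M q : ℝ) (hM : 0 < M) (hq : q ∈ Set.Ioc (0 : ℝ) (1 / 2))
    (hKL : ∃ η > (0 : ℝ), ∃ U ∈ 𝓝 xbar,
      ∀ y ∈ U, f xbar < f y → f y < f xbar + η →
        M * (f y - f xbar) ^ q ≤ ‖gradient f y‖) :
    ∃ c > (0 : ℝ), ∃ ρ ∈ Set.Ioo (0 : ℝ) 1, ∀ k : ℕ,
      ‖x k - xbar‖ ≤ c * ρ ^ k ∧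
      0 ≤ f (x k) - f xbar ∧ f (x k) - f xbar ≤ c * ρ ^ k ∧
      ‖gradient f (x k)‖ ≤ c * ρ ^ k := by
  classical
  obtain ⟨φ, hφ, hxφ⟩ := hacc
  obtain ⟨hq0, hq2⟩ := hq
  obtain ⟨η, hη, U, hU, hKLI⟩ := hKL
  set σ : ℝ := (1 - 2 * ν) / (2 * L) with hσdef
  have hσ : 0 < σ := div_pos (by linarith) (by linarith)
  -- basic norm comparisons
  have hub : ∀ k, ‖gradient f (x k)‖ ≤ (1 + ν) * ‖g k‖ := by
    intro k
    have e : gradient f (x k) = g k - (g k - gradient f (x k)) := by abel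
    rw [e]
    refine (norm_sub_le _ _).trans ?_
    have := herr k
    nlinarith [norm_nonneg (g k)]
  have hgpos : ∀ k, 0 < ‖g k‖ := by
    intro k
    rcases (norm_nonneg (g k)).lt_or_eq with h | h
    · exact h
    · exfalso
      have h2 := hub k
      rw [← h, mul_zero] at h2
      exact hgrad k (norm_le_zero_iff.mp h2)
  have hdec : ∀ k, f (x (k + 1)) ≤ f (x k) - σ * ‖g k‖ ^ 2 := by
    intro k
    rw [hiter k]
    exact igm_suffdec f hf L hL hlip ν hν0 (x k) (g k) (herr k)
  have hfanti : ∀ k, f (x (k + 1)) ≤ f (x k) := fun k =>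
    (hdec k).trans (sub_le_self _ (by positivity))
  have hanti : Antitone (fun k => f (x k)) := antitone_nat_of_succ_le hfanti
  have hsubanti : Antitone (fun m => f (x (φ m))) := hanti.comp_monotone hφ.monotone
  have hsub : Tendsto (fun m => f (x (φ m))) atTop (𝓝 (f xbar)) := by
    exact (hf.continuous.tendsto xbar).comp hxφ
  have hlowφ : ∀ m, f xbar ≤ f (x (φ m)) := fun m => hsubanti.le_of_tendsto hsub m
  have hlow : ∀ k, f xbar ≤ f (x k) := fun k => (hlowφ k).trans (hanti hφ.le_apply)
  have hflim : Tendsto (fun k => f (x k)) atTop (𝓝 (f xbar)) := by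
    have hbdd : BddBelow (Set.range fun k => f (x k)) :=
      ⟨f xbar, by rintro _ ⟨k, rfl⟩; exact hlow k⟩
    have h1 := tendsto_atTop_ciInf hanti hbdd
    have h2 := h1.comp hφ.tendsto_atTop
    have h3 := tendsto_nhds_unique h2 hsub
    rwa [h3] at h1
  set r : ℕ → ℝ := fun k => f (x k) - f xbar with hrdef
  have hrdec : ∀ k, r (k + 1) ≤ r k - σ * ‖g k‖ ^ 2 := by
    intro k
    have := hdec k
    simp only [hrdef]
    linarith
  have hrnn : ∀ k, 0 ≤ r k := fun k => sub_nonneg.mpr (hlow k)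
  have hrpos : ∀ k, 0 < r k := by
    intro k
    have h1 := hrnn (k + 1)
    have h2 := hrdec k
    nlinarith [mul_pos hσ (pow_pos (hgpos k) 2)]
  have hrlim : Tendsto r atTop (𝓝 0) := by
    have := hflim.sub_const (f xbar)
    simpa [hrdef] using this
  have hrmono : Antitone r :=
    antitone_nat_of_succ_le fun k =>
      (hrdec k).trans (sub_le_self _ (by positivity))
  have hgbound : ∀ k, ‖g k‖ ≤ Real.sqrt (r k / σ) := by
    intro k
    have h1 : σ * ‖g k‖ ^ 2 ≤ r k := by linarith [hrdec k, hrnn (k + 1)]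
    have h2 : ‖g k‖ ^ 2 ≤ r k / σ := by rw [le_div_iff₀ hσ]; linarith
    calc ‖g k‖ = Real.sqrt (‖g k‖ ^ 2) := (Real.sqrt_sq (norm_nonneg _)).symm
    _ ≤ Real.sqrt (r k / σ) := Real.sqrt_le_sqrt h2
  have hgradb : ∀ k, ‖gradient f (x k)‖ ≤ (1 + ν) * Real.sqrt (r k / σ) := fun k =>
    (hub k).trans (mul_le_mul_of_nonneg_left (hgbound k) (by linarith))
  have hstepnorm : ∀ k, ‖x (k + 1) - x k‖ ≤ (1 / L) * Real.sqrt (r k / σ) := by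
    intro k
    rw [hiter k]
    have e : x k - (1 / L) • g k - x k = -((1 / L) • g k) := by abel
    rw [e, norm_neg, norm_smul, Real.norm_eq_abs, abs_of_pos (by positivity : (0:ℝ) < 1 / L)]
    exact mul_le_mul_of_nonneg_left (hgbound k) (by positivity)
  -- neighborhood and rates
  obtain ⟨ε, hε, hball⟩ := Metric.mem_nhds_iff.mp hU
  set β : ℝ := σ * M ^ 2 / (1 + ν) ^ 2 with hβdef
  have hβ : 0 < β := by positivity
  set ρ : ℝ := max (1 - β) (1 / 2) with hρdef
  have hρ0 : 0 < ρ := lt_of_lt_of_le (by norm_num) (le_max_right _ _)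
  have hρ1 : ρ < 1 := max_lt (by linarith) (by norm_num)
  set θ : ℝ := Real.sqrt ρ with hθdef
  have hθ0 : 0 < θ := Real.sqrt_pos.mpr hρ0
  have hθ1 : θ < 1 := by
    rw [hθdef, show (1 : ℝ) = Real.sqrt 1 by simp]
    exact Real.sqrt_lt_sqrt hρ0.le hρ1
  have hθsq : θ ^ 2 = ρ := Real.sq_sqrt hρ0.le
  have hρθ : ρ ≤ θ := by nlinarith
  -- the KL step
  have hstep : ∀ k, x k ∈ U → r k < η → r k ≤ 1 → r (k + 1) ≤ ρ * r k := by
    intro k hkU hkη hk1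
    have hKLk : M * (r k) ^ q ≤ ‖gradient f (x k)‖ := by
      refine hKLI (x k) hkU ?_ ?_
      · have := hrpos k; simp only [hrdef] at this; linarith
      · have := hkη; simp only [hrdef] at this ⊢; linarith
    have h1 : M * (r k) ^ q ≤ (1 + ν) * ‖g k‖ := hKLk.trans (hub k)
    have hrq : 0 ≤ (r k) ^ q := Real.rpow_nonneg (hrnn k) q
    have h2 : (M * (r k) ^ q) ^ 2 ≤ ((1 + ν) * ‖g k‖) ^ 2 :=
      pow_le_pow_left₀ (by positivity) h1 2
    have h3 : ((r k) ^ q) ^ (2 : ℕ) = (r k) ^ (2 * q) := by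
      rw [← Real.rpow_natCast ((r k) ^ q) 2, ← Real.rpow_mul (hrnn k)]
      norm_num [mul_comm]
    have h4 : r k ≤ (r k) ^ (2 * q) := by
      have := Real.rpow_le_rpow_of_exponent_ge (hrpos k) hk1 (by linarith : 2 * q ≤ 1)
      simpa using this
    have h5 : β * r k ≤ σ * ‖g k‖ ^ 2 := by
      have hν1 : (0 : ℝ) < (1 + ν) ^ 2 := by positivity
      rw [hβdef, div_mul_eq_mul_div, div_le_iff₀ hν1]
      calc σ * M ^ 2 * r k ≤ σ * M ^ 2 * ((r k) ^ (2 * q)) := by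
            exact mul_le_mul_of_nonneg_left h4 (by positivity)
      _ = σ * (M * (r k) ^ q) ^ 2 := by rw [← h3]; ring
      _ ≤ σ * ((1 + ν) * ‖g k‖) ^ 2 := mul_le_mul_of_nonneg_left h2 hσ.le
      _ = σ * ‖g k‖ ^ 2 * (1 + ν) ^ 2 := by ring
    have h6 := hrdec k
    have h7 : r (k + 1) ≤ (1 - β) * r k := by linarith
    calc r (k + 1) ≤ (1 - β) * r k := h7
    _ ≤ ρ * r k := mul_le_mul_of_nonneg_right (le_max_left _ _) (hrnn k)
  -- choose the starting index K
  set δ : ℝ := min 1 (min η (σ * (L * ε * (1 - θ) / 2) ^ 2)) with hδdef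
  have hδη : δ ≤ η := (min_le_right _ _).trans (min_le_left _ _)
  have hδ1 : δ ≤ 1 := min_le_left _ _
  have hδX : δ ≤ σ * (L * ε * (1 - θ) / 2) ^ 2 := (min_le_right _ _).trans (min_le_right _ _)
  have hδ0 : 0 < δ := by
    refine lt_min one_pos (lt_min hη ?_)
    have h1θ : 0 < 1 - θ := by linarith
    positivity
  have hev1 : ∀ᶠ k in atTop, r k < δ := hrlim.eventually_lt_const hδ0
  have hev1' : ∀ᶠ m in atTop, r (φ m) < δ := hφ.tendsto_atTop.eventually hev1
  have hev2 : ∀ᶠ m in atTop, dist (x (φ m)) xbar < ε / 2 :=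
    (Metric.tendsto_nhds.mp hxφ) (ε / 2) (by positivity)
  obtain ⟨m₀, hm1, hm2⟩ := (hev1'.and hev2).exists
  set K := φ m₀ with hKdef
  have hrK : r K < δ := hm1
  have hxK : dist (x K) xbar < ε / 2 := hm2
  set A : ℝ := (1 / L) * Real.sqrt (r K / σ) with hAdef
  have hA0 : 0 ≤ A := by positivity
  have h1θ : 0 < 1 - θ := by linarith
  have hAbound : A * (1 - θ)⁻¹ < ε / 2 := by
    have h1 : r K < σ * (L * ε * (1 - θ) / 2) ^ 2 := lt_of_lt_of_le hrK hδX
    have h2 : r K / σ < (L * ε * (1 - θ) / 2) ^ 2 := by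
      rw [div_lt_iff₀ hσ]; linarith [h1]
    have h3 : Real.sqrt (r K / σ) < L * ε * (1 - θ) / 2 :=
      (Real.sqrt_lt' (by positivity)).mpr h2
    have h4 : A < ε * (1 - θ) / 2 := by
      have := mul_lt_mul_of_pos_left h3 (by positivity : (0:ℝ) < 1 / L)
      calc A < (1 / L) * (L * ε * (1 - θ) / 2) := this
      _ = ε * (1 - θ) / 2 := by field_simp
    calc A * (1 - θ)⁻¹ < (ε * (1 - θ) / 2) * (1 - θ)⁻¹ :=
          mul_lt_mul_of_pos_right h4 (by positivity)
    _ = ε / 2 := by field_simp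
  -- single-step distance bound given the value bound
  have hsK : ∀ j, r (K + j) ≤ ρ ^ j * r K → ‖x (K + j + 1) - x (K + j)‖ ≤ A * θ ^ j := by
    intro j hj
    have h2 : r (K + j) / σ ≤ ρ ^ j * (r K / σ) := by
      rw [div_le_iff₀ hσ]
      calc r (K + j) ≤ ρ ^ j * r K := hj
      _ = ρ ^ j * (r K / σ) * σ := by field_simp
    calc ‖x (K + j + 1) - x (K + j)‖ ≤ (1 / L) * Real.sqrt (r (K + j) / σ) := hstepnorm (K + j)
    _ ≤ (1 / L) * Real.sqrt (ρ ^ j * (r K / σ)) := by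
        exact mul_le_mul_of_nonneg_left (Real.sqrt_le_sqrt h2) (by positivity)
    _ = A * θ ^ j := by
        rw [Real.sqrt_mul (pow_nonneg hρ0.le j), igm_sqrt_pow hρ0.le, hAdef, ← hθdef]
        ring
  -- main induction
  have hmain : ∀ m, ∀ j ≤ m, r (K + j) ≤ ρ ^ j * r K := by
    intro m
    induction m with
    | zero =>
      intro j hj
      rw [Nat.le_zero] at hj
      subst hj
      simp
    | succ m ih =>
      intro j hj
      rcases Nat.lt_or_ge j (m + 1) with h | h
      · exact ih j (Nat.lt_succ_iff.mp h)
      · have hj' : j = m + 1 := le_antisymm hj h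
        subst hj'
        have hdist : dist (x K) (x (K + m)) ≤ A * (1 - θ)⁻¹ := by
          have h1 := dist_le_range_sum_dist (fun i => x (K + i)) m
          have h2 : ∀ i ∈ Finset.range m, dist (x (K + i)) (x (K + (i + 1))) ≤ A * θ ^ i := by
            intro i hi
            have := hsK i (ih i (Finset.mem_range.mp hi).le)
            rw [dist_comm, dist_eq_norm]
            simpa [← Nat.add_assoc] using this
          calc dist (x K) (x (K + m))
              ≤ ∑ i ∈ Finset.range m, dist (x (K + i)) (x (K + (i + 1))) := by
                simpa using h1
          _ ≤ ∑ i ∈ Finset.range m, A * θ ^ i := Finset.sum_le_sum h2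
          _ = A * ∑ i ∈ Finset.range m, θ ^ i := by rw [Finset.mul_sum]
          _ ≤ A * (1 - θ)⁻¹ := mul_le_mul_of_nonneg_left (igm_geom hθ0.le hθ1 m) hA0
        have hmemU : x (K + m) ∈ U := by
          apply hball
          rw [Metric.mem_ball]
          calc dist (x (K + m)) xbar ≤ dist (x (K + m)) (x K) + dist (x K) xbar :=
                dist_triangle _ _ _
          _ < ε := by
                rw [dist_comm (x (K + m)) (x K)]
                linarith [hdist, hxK, hAbound]
        have hrKm := ih m le_rfl
        have hρm1 : ρ ^ m ≤ 1 := pow_le_one₀ hρ0.le hρ1.le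
        have hrKm' : r (K + m) ≤ r K := by
          have h := mul_le_mul_of_nonneg_right hρm1 (hrnn K)
          rw [one_mul] at h
          exact hrKm.trans h
        have hη' : r (K + m) < η := lt_of_le_of_lt hrKm' (lt_of_lt_of_le hrK hδη)
        have h1' : r (K + m) ≤ 1 := hrKm'.trans (le_of_lt (lt_of_lt_of_le hrK hδ1))
        have hs := hstep (K + m) hmemU hη' h1'
        calc r (K + (m + 1)) = r (K + m + 1) := by rw [← Nat.add_assoc]
        _ ≤ ρ * r (K + m) := hs
        _ ≤ ρ * (ρ ^ m * r K) := mul_le_mul_of_nonneg_left hrKm hρ0.le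
        _ = ρ ^ (m + 1) * r K := by ring
  have hmain' : ∀ j, r (K + j) ≤ ρ ^ j * r K := fun j => hmain j j le_rfl
  -- distance to xbar bound
  have hxbound : ∀ m, ‖x (K + m) - xbar‖ ≤ A * (1 - θ)⁻¹ * θ ^ m := by
    intro m
    have hbnd : ∀ p, dist (x (K + m)) (x (K + m + p)) ≤ A * (1 - θ)⁻¹ * θ ^ m := by
      intro p
      have h1 := dist_le_range_sum_dist (fun i => x (K + m + i)) p
      have h2 : ∀ i ∈ Finset.range p,
          dist (x (K + m + i)) (x (K + m + (i + 1))) ≤ A * θ ^ m * θ ^ i := by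
        intro i _
        have := hsK (m + i) (hmain' (m + i))
        rw [dist_comm, dist_eq_norm]
        have e : A * θ ^ (m + i) = A * θ ^ m * θ ^ i := by rw [pow_add]; ring
        rw [show K + m + (i + 1) = K + (m + i) + 1 by omega, show K + m + i = K + (m + i) by omega]
        linarith [this, e ▸ this]
      calc dist (x (K + m)) (x (K + m + p))
          ≤ ∑ i ∈ Finset.range p, dist (x (K + m + i)) (x (K + m + (i + 1))) := by
            simpa using h1
      _ ≤ ∑ i ∈ Finset.range p, A * θ ^ m * θ ^ i := Finset.sum_le_sum h2
      _ = A * θ ^ m * ∑ i ∈ Finset.range p, θ ^ i := by rw [Finset.mul_sum]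
      _ ≤ A * θ ^ m * (1 - θ)⁻¹ :=
            mul_le_mul_of_nonneg_left (igm_geom hθ0.le hθ1 p) (by positivity)
      _ = A * (1 - θ)⁻¹ * θ ^ m := by ring
    have hlim2 : Tendsto (fun i => dist (x (K + m)) (x (φ i))) atTop
        (𝓝 (dist (x (K + m)) xbar)) := tendsto_const_nhds.dist hxφ
    have hev : ∀ᶠ i in atTop, dist (x (K + m)) (x (φ i)) ≤ A * (1 - θ)⁻¹ * θ ^ m := by
      filter_upwards [hφ.tendsto_atTop.eventually (eventually_ge_atTop (K + m))] with i hi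
      obtain ⟨p, hp⟩ := Nat.exists_eq_add_of_le hi
      rw [hp]
      exact hbnd p
    have := le_of_tendsto hlim2 hev
    rwa [dist_eq_norm] at this
  -- gradient bound beyond K
  have hgK : ∀ m, ‖gradient f (x (K + m))‖ ≤ (1 + ν) * Real.sqrt (r K / σ) * θ ^ m := by
    intro m
    have h2 : r (K + m) / σ ≤ ρ ^ m * (r K / σ) := by
      rw [div_le_iff₀ hσ]
      calc r (K + m) ≤ ρ ^ m * r K := hmain' m
      _ = ρ ^ m * (r K / σ) * σ := by field_simp
    calc ‖gradient f (x (K + m))‖ ≤ (1 + ν) * Real.sqrt (r (K + m) / σ) := hgradb (K + m)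
    _ ≤ (1 + ν) * Real.sqrt (ρ ^ m * (r K / σ)) := by
        exact mul_le_mul_of_nonneg_left (Real.sqrt_le_sqrt h2) (by linarith)
    _ = (1 + ν) * Real.sqrt (r K / σ) * θ ^ m := by
        rw [Real.sqrt_mul (pow_nonneg hρ0.le m), igm_sqrt_pow hρ0.le, ← hθdef]
        ring
  -- value bound beyond K
  have hrKb : ∀ m, r (K + m) ≤ r K * θ ^ m := by
    intro m
    calc r (K + m) ≤ ρ ^ m * r K := hmain' m
    _ ≤ θ ^ m * r K := mul_le_mul_of_nonneg_right (pow_le_pow_left₀ hρ0.le hρθ m) (hrnn K)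
    _ = r K * θ ^ m := by ring
  -- assemble constants
  have hθKne : (θ : ℝ) ^ K ≠ 0 := (pow_pos hθ0 K).ne'
  clear_value A δ θ ρ β σ K r
  set S : ℝ := ∑ j ∈ Finset.range K, ‖x (j + 1) - x j‖ with hSdef
  have hS0 : 0 ≤ S := Finset.sum_nonneg fun j _ => norm_nonneg _
  set D : ℝ := r 0 + (1 + ν) * Real.sqrt (r 0 / σ) + (‖x 0 - xbar‖ + S)
      + r K + (1 + ν) * Real.sqrt (r K / σ) + A * (1 - θ)⁻¹ + 1 with hDdef
  have hD0 : 0 < D := by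
    have hr0' := hrnn 0
    have hrK' := hrnn K
    rw [hDdef]
    have h1 : 0 ≤ (1 + ν) * Real.sqrt (r 0 / σ) :=
      mul_nonneg (by linarith) (Real.sqrt_nonneg _)
    have h2 : 0 ≤ (1 + ν) * Real.sqrt (r K / σ) :=
      mul_nonneg (by linarith) (Real.sqrt_nonneg _)
    have h3 : 0 ≤ A * (1 - θ)⁻¹ := mul_nonneg hA0 (inv_nonneg.mpr h1θ.le)
    have h4 : 0 ≤ ‖x 0 - xbar‖ := norm_nonneg _
    linarith
  have hθK : 0 < θ ^ K := pow_pos hθ0 K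
  refine ⟨D / θ ^ K, div_pos hD0 hθK, θ, ⟨hθ0, hθ1⟩, ?_⟩
  have hkey : ∀ (V C : ℝ) (m : ℕ), 0 ≤ C → C ≤ D → V ≤ C * θ ^ m →
      V ≤ D / θ ^ K * θ ^ (K + m) := by
    intro V C m hC0 hCD hV
    have e : D / θ ^ K * θ ^ (K + m) = D * θ ^ m := by
      rw [pow_add]
      field_simp
    rw [e]
    calc V ≤ C * θ ^ m := hV
    _ ≤ D * θ ^ m := mul_le_mul_of_nonneg_right hCD (pow_nonneg hθ0.le m)
  have hkey2 : ∀ (V : ℝ) (k : ℕ), k < K → 0 ≤ V → V ≤ D → V ≤ D / θ ^ K * θ ^ k := by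
    intro V k hk _ hVD
    have hθk : θ ^ K ≤ θ ^ k := pow_le_pow_of_le_one hθ0.le hθ1.le hk.le
    calc V ≤ D := hVD
    _ = D / θ ^ K * θ ^ K := (div_mul_cancel₀ D hθKne).symm
    _ ≤ D / θ ^ K * θ ^ k := mul_le_mul_of_nonneg_left hθk (div_nonneg hD0.le hθK.le)
  intro k
  have hrk_eq : f (x k) - f xbar = r k := by rw [hrdef]
  rw [hrk_eq]
  have hDterms : r 0 ≤ D ∧ (1 + ν) * Real.sqrt (r 0 / σ) ≤ D ∧ ‖x 0 - xbar‖ + S ≤ D ∧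
      r K ≤ D ∧ (1 + ν) * Real.sqrt (r K / σ) ≤ D ∧ A * (1 - θ)⁻¹ ≤ D := by
    have h0 := hrnn 0
    have hK' := hrnn K
    have h1 : 0 ≤ (1 + ν) * Real.sqrt (r 0 / σ) :=
      mul_nonneg (by linarith) (Real.sqrt_nonneg _)
    have h2 : 0 ≤ (1 + ν) * Real.sqrt (r K / σ) :=
      mul_nonneg (by linarith) (Real.sqrt_nonneg _)
    have h3 : 0 ≤ A * (1 - θ)⁻¹ := mul_nonneg hA0 (inv_nonneg.mpr h1θ.le)
    have h4 : 0 ≤ ‖x 0 - xbar‖ := norm_nonneg _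
    refine ⟨by rw [hDdef]; linarith, by rw [hDdef]; linarith, by rw [hDdef]; linarith,
      by rw [hDdef]; linarith, by rw [hDdef]; linarith, by rw [hDdef]; linarith⟩
  obtain ⟨hD1, hD2, hD3, hD4, hD5, hD6⟩ := hDterms
  rcases Nat.lt_or_ge k K with hk | hk
  · -- initial segment
    refine ⟨?_, hrnn k, ?_, ?_⟩
    · -- ‖x k - xbar‖
      apply hkey2 _ _ hk (norm_nonneg _)
      have h1 := dist_le_range_sum_dist (fun i => x i) k
      have h2 : dist (x 0) (x k) ≤ S := by
        calc dist (x 0) (x k) ≤ ∑ i ∈ Finset.range k, dist (x i) (x (i + 1)) := by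
              simpa using h1
        _ = ∑ i ∈ Finset.range k, ‖x (i + 1) - x i‖ :=
              Finset.sum_congr rfl fun i _ => by rw [dist_comm, dist_eq_norm]
        _ ≤ S := by
              rw [hSdef]
              exact Finset.sum_le_sum_of_subset_of_nonneg
                (Finset.range_subset_range.mpr hk.le) (fun j _ _ => norm_nonneg _)
      have h5 : ‖x k - xbar‖ ≤ ‖x 0 - xbar‖ + S := by
        have e : x k - xbar = (x k - x 0) + (x 0 - xbar) := by abel
        rw [e]
        refine (norm_add_le _ _).trans ?_
        have h6 : ‖x k - x 0‖ ≤ S := by rw [← dist_eq_norm, dist_comm]; exact h2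
        linarith
      exact h5.trans hD3
    · exact hkey2 _ _ hk (hrnn k) ((hrmono (Nat.zero_le k)).trans hD1)
    · apply hkey2 _ _ hk (norm_nonneg _)
      refine (hgradb k).trans (le_trans ?_ hD2)
      have : r k / σ ≤ r 0 / σ := by
        rw [div_eq_mul_inv, div_eq_mul_inv]
        exact mul_le_mul_of_nonneg_right (hrmono (Nat.zero_le k)) (inv_nonneg.mpr hσ.le)
      exact mul_le_mul_of_nonneg_left (Real.sqrt_le_sqrt this) (by linarith)
  · -- tail
    obtain ⟨m, rfl⟩ := Nat.exists_eq_add_of_le hk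
    refine ⟨?_, hrnn _, ?_, ?_⟩
    · exact hkey _ _ m (mul_nonneg hA0 (inv_nonneg.mpr h1θ.le)) hD6 (hxbound m)
    · exact hkey _ _ m (hrnn K) hD4 (hrKb m)
    · exact hkey _ _ m (mul_nonneg (by linarith) (Real.sqrt_nonneg _)) hD5 (hgK m)
end

section
/- Let g : ℝⁿ → (−∞, ∞] be a proper, lower semicontinuous, convex function, let λ > 0 and μ > 2, and let {x^k}, {p^k} ⊂ ℝⁿ and positive reals {ε_k} satisfy, for all k: ‖p^k − Prox_{λg}(x^k)‖ ≤ λ ε_{k+1}, ‖x^k − p^k‖ > λ μ ε_{k+1}, and x^{k+1} = p^k, where for each k the point x^k is not a minimizer of g (i.e., 0 ∉ ∂g(x^k)). If x̄ is an accumulation point of {x^k}, then x̄ is a minimizer of g over ℝⁿ, and moreover ‖x^k − p^k‖ → 0 and ε_k → 0 as k → ∞. -/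
open Filter Topology
open scoped RealInnerProductSpace

theorem aux_fin' {n : ℕ} (g : EuclideanSpace ℝ (Fin n) → EReal)
    (hproper : ∃ z, g z ≠ ⊤) (hnebot : ∀ z, g z ≠ ⊥)
    (lam : ℝ)
    (prox : EuclideanSpace ℝ (Fin n) → EuclideanSpace ℝ (Fin n))
    (hprox : ∀ z y : EuclideanSpace ℝ (Fin n),
      g (prox z) + ((1 / (2 * lam) * ‖prox z - z‖ ^ 2 : ℝ) : EReal) ≤
        g y + ((1 / (2 * lam) * ‖y - z‖ ^ 2 : ℝ) : EReal)) (z : EuclideanSpace ℝ (Fin n)) :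
    g (prox z) = (((g (prox z)).toReal : ℝ) : EReal) := by
  obtain ⟨z0, hz0⟩ := hproper
  have h := hprox z z0
  have hne : g (prox z) ≠ ⊤ := by
    intro htop
    rw [htop, EReal.top_add_coe] at h
    have := top_le_iff.mp h
    have h2 := EReal.coe_toReal hz0 (hnebot z0)
    rw [← h2, ← EReal.coe_add] at this
    exact (EReal.coe_ne_top _) this
  exact (EReal.coe_toReal hne (hnebot _)).symm

theorem aux_subgrad' {n : ℕ} (g : EuclideanSpace ℝ (Fin n) → EReal)
    (hproper : ∃ z, g z ≠ ⊤) (hnebot : ∀ z, g z ≠ ⊥)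
    (hconv : ∀ u v : EuclideanSpace ℝ (Fin n), ∀ t : ℝ, 0 ≤ t → t ≤ 1 →
      g (t • u + (1 - t) • v) ≤ (t : EReal) * g u + ((1 - t : ℝ) : EReal) * g v)
    (lam : ℝ) (hlam : 0 < lam)
    (prox : EuclideanSpace ℝ (Fin n) → EuclideanSpace ℝ (Fin n))
    (hprox : ∀ z y : EuclideanSpace ℝ (Fin n),
      g (prox z) + ((1 / (2 * lam) * ‖prox z - z‖ ^ 2 : ℝ) : EReal) ≤
        g y + ((1 / (2 * lam) * ‖y - z‖ ^ 2 : ℝ) : EReal))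
    (z y : EuclideanSpace ℝ (Fin n)) (ry : ℝ) (hy : g y = (ry : EReal)) :
    (g (prox z)).toReal + (1/lam) * ⟪z - prox z, y - prox z⟫ ≤ ry := by
  have hq : g (prox z) = (((g (prox z)).toReal : ℝ) : EReal) :=
    aux_fin' g hproper hnebot lam prox hprox z
  set q := prox z with hqdef
  set rp := (g (prox z)).toReal with hrpdef
  set c := 1/(2*lam) with hcdef
  have hc : 0 < c := by positivity
  have h2c : 1/lam = 2*c := by rw [hcdef]; field_simp
  set I := ⟪q - z, y - q⟫ with hIdef
  set S := ‖y - q‖^2 with hSdef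
  have hS : 0 ≤ S := by positivity
  have key : ∀ t : ℝ, 0 < t → t ≤ 1 → rp ≤ ry + 2*c*I + c*t*S := by
    intro t ht ht1
    have hcv := hconv y q t ht.le ht1
    rw [hy, hq, ← EReal.coe_mul, ← EReal.coe_mul, ← EReal.coe_add] at hcv
    have hpx := hprox z (t • y + (1-t) • q)
    have hcomb : g (t•y + (1-t)•q) + ((1/(2*lam) * ‖(t•y+(1-t)•q) - z‖^2 : ℝ) : EReal)
        ≤ (((t*ry + (1-t)*rp) + 1/(2*lam) * ‖(t•y+(1-t)•q) - z‖^2 : ℝ) : EReal) := by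
      rw [EReal.coe_add]; exact add_le_add hcv le_rfl
    have h2 := le_trans hpx hcomb
    rw [hq, ← EReal.coe_add] at h2
    have h3 := EReal.coe_le_coe_iff.mp h2
    have hvec : (t•y + (1-t)•q) - z = (q - z) + t • (y - q) := by module
    rw [hvec] at h3
    have hexp : ‖(q - z) + t • (y - q)‖^2 = ‖q-z‖^2 + 2*(t*I) + t^2*S := by
      rw [norm_add_sq_real, real_inner_smul_right, norm_smul, Real.norm_eq_abs,
        abs_of_nonneg ht.le, hIdef, hSdef]
      ring
    rw [hexp] at h3
    have h4 : t * rp ≤ t * (ry + 2*c*I + c*t*S) := by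
      rw [← hqdef] at h3
      nlinarith [h3]
    exact le_of_mul_le_mul_left h4 ht
  have hIneg : ⟪z - q, y - q⟫ = -I := by
    rw [hIdef, ← inner_neg_left]; congr 1; abel
  rw [hIneg, h2c]
  have : rp ≤ ry + 2*c*I := by
    apply le_of_forall_pos_le_add
    intro η hη
    have htpos : 0 < min 1 (η/(c*S+1)) := by
      apply lt_min one_pos; positivity
    have h := key _ htpos (min_le_left _ _)
    have hbound : c * min 1 (η/(c*S+1)) * S ≤ η := by
      have h1 : min 1 (η/(c*S+1)) ≤ η/(c*S+1) := min_le_right _ _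
      have h2 : c*S+1 > 0 := by positivity
      calc c * min 1 (η/(c*S+1)) * S = (c*S) * min 1 (η/(c*S+1)) := by ring
        _ ≤ (c*S) * (η/(c*S+1)) := mul_le_mul_of_nonneg_left h1 (mul_nonneg hc.le hS)
        _ ≤ η := by
            rw [div_eq_inv_mul, ← mul_assoc]
            have h5 : (c*S) * (c*S+1)⁻¹ ≤ 1 := by
              rw [mul_inv_le_iff₀ h2]; linarith
            nlinarith [hη.le]
    linarith
  linarith

theorem aux_strong' {n : ℕ} (g : EuclideanSpace ℝ (Fin n) → EReal)
    (hproper : ∃ z, g z ≠ ⊤) (hnebot : ∀ z, g z ≠ ⊥)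
    (hconv : ∀ u v : EuclideanSpace ℝ (Fin n), ∀ t : ℝ, 0 ≤ t → t ≤ 1 →
      g (t • u + (1 - t) • v) ≤ (t : EReal) * g u + ((1 - t : ℝ) : EReal) * g v)
    (lam : ℝ) (hlam : 0 < lam)
    (prox : EuclideanSpace ℝ (Fin n) → EuclideanSpace ℝ (Fin n))
    (hprox : ∀ z y : EuclideanSpace ℝ (Fin n),
      g (prox z) + ((1 / (2 * lam) * ‖prox z - z‖ ^ 2 : ℝ) : EReal) ≤
        g y + ((1 / (2 * lam) * ‖y - z‖ ^ 2 : ℝ) : EReal))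
    (z y : EuclideanSpace ℝ (Fin n)) (ry : ℝ) (hy : g y = (ry : EReal)) :
    (g (prox z)).toReal + 1/(2*lam)*‖prox z - z‖^2 + 1/(2*lam)*‖y - prox z‖^2
      ≤ ry + 1/(2*lam)*‖y - z‖^2 := by
  have hA := aux_subgrad' g hproper hnebot hconv lam hlam prox hprox z y ry hy
  set q := prox z with hqdef
  have hvec : y - z = (y - q) + (q - z) := by abel
  rw [hvec, norm_add_sq_real]
  have hinner : ⟪z - q, y - q⟫ = -⟪y - q, q - z⟫ := by
    rw [real_inner_comm, ← inner_neg_right]; congr 1; abel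
  rw [hinner] at hA
  have h2c : (1:ℝ)/lam = 2*(1/(2*lam)) := by field_simp
  rw [h2c] at hA
  nlinarith [hA, sq_nonneg ‖y - q‖]

set_option maxHeartbeats 2000000 in
theorem GIPPM_accumulation_points_minimize {n : ℕ}
    (g : EuclideanSpace ℝ (Fin n) → EReal)
    (hproper : ∃ z, g z ≠ ⊤) (hnebot : ∀ z, g z ≠ ⊥)
    (hlsc : LowerSemicontinuous g)
    (hconv : ∀ u v : EuclideanSpace ℝ (Fin n), ∀ t : ℝ, 0 ≤ t → t ≤ 1 →
      g (t • u + (1 - t) • v) ≤ (t : EReal) * g u + ((1 - t : ℝ) : EReal) * g v)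
    (lam μ : ℝ) (hlam : 0 < lam) (hμ : 2 < μ)
    (prox : EuclideanSpace ℝ (Fin n) → EuclideanSpace ℝ (Fin n))
    (hprox : ∀ z y : EuclideanSpace ℝ (Fin n),
      g (prox z) + ((1 / (2 * lam) * ‖prox z - z‖ ^ 2 : ℝ) : EReal) ≤
        g y + ((1 / (2 * lam) * ‖y - z‖ ^ 2 : ℝ) : EReal))
    (x p : ℕ → EuclideanSpace ℝ (Fin n)) (ε : ℕ → ℝ) (hε : ∀ k : ℕ, 0 < ε k)
    (herr : ∀ k : ℕ, ‖p k - prox (x k)‖ ≤ lam * ε (k + 1))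
    (hbig : ∀ k : ℕ, lam * μ * ε (k + 1) < ‖x k - p k‖)
    (hiter : ∀ k : ℕ, x (k + 1) = p k)
    (hnotmin : ∀ k : ℕ, ∃ y, g y < g (x k))
    (xbar : EuclideanSpace ℝ (Fin n))
    (hacc : ∃ φ : ℕ → ℕ, StrictMono φ ∧ Tendsto (fun k => x (φ k)) atTop (𝓝 xbar)) :
    (∀ y, g xbar ≤ g y) ∧
      Tendsto (fun k => ‖x k - p k‖) atTop (𝓝 0) ∧
      Tendsto ε atTop (𝓝 0) := by
  obtain ⟨φ, hφ, hxφ⟩ := hacc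
  have hc : (0:ℝ) < 1/(2*lam) := by positivity
  set c := 1/(2*lam) with hcdef
  set y := fun k => prox (x k) with hydef
  set a := fun k => (g (y k)).toReal with hadef
  have hfin : ∀ k, g (y k) = ((a k : ℝ) : EReal) := fun k =>
    aux_fin' g hproper hnebot lam prox hprox (x k)
  set b := fun k => c * ‖y k - x k‖^2 with hbdef
  have hb0 : ∀ k, 0 ≤ b k := fun k => by
    have : (0:ℝ) ≤ ‖y k - x k‖^2 := sq_nonneg _
    exact mul_nonneg hc.le this
  set En := fun k => a k + b k with hEdef
  -- basic estimates
  have hF1 : ∀ k, ‖y k - x (k+1)‖ ≤ lam * ε (k+1) := by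
    intro k
    rw [hiter k, norm_sub_rev]
    exact herr k
  have hF2 : ∀ k, lam * (μ-1) * ε (k+1) < ‖y k - x k‖ := by
    intro k
    have h1 := herr k
    have h2 := hbig k
    have htri : ‖x k - p k‖ ≤ ‖x k - y k‖ + ‖y k - p k‖ := norm_sub_le_norm_sub_add_norm_sub _ _ _
    have hr1 : ‖y k - p k‖ = ‖p k - y k‖ := norm_sub_rev _ _
    have hr2 : ‖x k - y k‖ = ‖y k - x k‖ := norm_sub_rev _ _
    have hexp : lam * (μ-1) * ε (k+1) = lam*μ*ε (k+1) - lam*ε (k+1) := by ring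
    rw [hexp]
    have : ‖p k - y k‖ ≤ lam * ε (k+1) := h1
    linarith [htri, h2, hr1 ▸ this, hr2 ▸ htri]
  -- decrease
  have hμ1 : (1:ℝ) < μ - 1 := by linarith
  have hμ2 : (0:ℝ) < (μ-1)^2 := by positivity
  set δ := 1 - 1/((μ-1)^2) with hδdef
  have hδpos : 0 < δ := by
    rw [hδdef]
    have h : (1:ℝ) < (μ-1)^2 := by nlinarith
    have := (div_lt_one hμ2).mpr h
    linarith
  have hdec : ∀ k, En (k+1) + δ * b k ≤ En k := by
    intro k
    have hB : a (k+1) + c*‖y (k+1) - x (k+1)‖^2 + c*‖y k - y (k+1)‖^2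
        ≤ a k + c*‖y k - x (k+1)‖^2 :=
      aux_strong' g hproper hnebot hconv lam hlam prox hprox (x (k+1)) (y k) (a k) (hfin k)
    have h1 := hF1 k
    have h2 := hF2 k
    have hεp := (hε (k+1)).le
    have hsq1 : ‖y k - x (k+1)‖^2 ≤ (lam * ε (k+1))^2 := by
      nlinarith [norm_nonneg (y k - x (k+1))]
    have hsq2 : (lam * (μ-1) * ε (k+1))^2 ≤ ‖y k - x k‖^2 := by
      nlinarith [mul_nonneg (mul_nonneg hlam.le (by linarith : (0:ℝ) ≤ μ-1)) hεp]
    have h5 : c*‖y k - x (k+1)‖^2 * (μ-1)^2 ≤ c * ‖y k - x k‖^2 := by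
      have hc2 : (0:ℝ) ≤ c*(μ-1)^2 := by positivity
      have step1 := mul_le_mul_of_nonneg_left hsq1 hc2
      have step2 := mul_le_mul_of_nonneg_left hsq2 hc.le
      nlinarith [step1, step2]
    have e1 : δ * (μ-1)^2 = (μ-1)^2 - 1 := by
      rw [hδdef]; field_simp
    have key : c*‖y k - x (k+1)‖^2 + δ*(c*‖y k - x k‖^2) ≤ c*‖y k - x k‖^2 := by
      have hmul : (c*‖y k - x (k+1)‖^2 + δ*(c*‖y k - x k‖^2)) * (μ-1)^2
          ≤ (c*‖y k - x k‖^2) * (μ-1)^2 := by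
        have e2 : (c*‖y k - x (k+1)‖^2 + δ*(c*‖y k - x k‖^2)) * (μ-1)^2
            = c*‖y k - x (k+1)‖^2 * (μ-1)^2 + (δ*(μ-1)^2)*(c*‖y k - x k‖^2) := by ring
        rw [e2, e1]
        linarith [h5]
      exact le_of_mul_le_mul_right hmul hμ2
    have hnn : 0 ≤ c*‖y k - y (k+1)‖^2 := by positivity
    show a (k+1) + b (k+1) + δ * b k ≤ a k + b k
    simp only [hbdef]
    linarith [hB, key, hnn]
  have hant : Antitone En := antitone_nat_of_succ_le fun k => by
    have h1 := hdec k
    have h2 := mul_nonneg hδpos.le (hb0 k)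
    linarith
  -- lower bound along the subsequence
  obtain ⟨R, hR⟩ : ∃ R, ∀ k, ‖x (φ k) - y 0‖ ≤ R := by
    have htd : Tendsto (fun k => ‖x (φ k) - y 0‖) atTop (𝓝 ‖xbar - y 0‖) :=
      (hxφ.sub tendsto_const_nhds).norm
    obtain ⟨R, hR⟩ := htd.bddAbove_range
    exact ⟨R, fun k => hR (Set.mem_range_self k)⟩
  set v := x 0 - y 0 with hvdef
  have hAj : ∀ j, a 0 + (1/lam)*⟪v, y j - y 0⟫ ≤ a j := fun j =>
    aux_subgrad' g hproper hnebot hconv lam hlam prox hprox (x 0) (y j) (a j) (hfin j)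
  set M := a 0 - ‖v‖^2/(2*lam) - (1/lam)*‖v‖*R with hMdef
  have hlow : ∀ k, M ≤ En (φ k) := by
    intro k
    have hA := hAj (φ k)
    have hsplit : ⟪v, y (φ k) - y 0⟫ = ⟪v, y (φ k) - x (φ k)⟫ + ⟪v, x (φ k) - y 0⟫ := by
      rw [← inner_add_right]; congr 1; abel
    have hb1 : -(‖v‖ * ‖y (φ k) - x (φ k)‖) ≤ ⟪v, y (φ k) - x (φ k)⟫ := by
      have := abs_real_inner_le_norm v (y (φ k) - x (φ k))
      have h := neg_abs_le (⟪v, y (φ k) - x (φ k)⟫)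
      linarith
    have hb2 : -(‖v‖ * R) ≤ ⟪v, x (φ k) - y 0⟫ := by
      have h1 := abs_real_inner_le_norm v (x (φ k) - y 0)
      have h2 := neg_abs_le (⟪v, x (φ k) - y 0⟫)
      have h3 := hR k
      nlinarith [norm_nonneg v]
    have hpos : (0:ℝ) < 1/lam := by positivity
    have hkey : -(‖v‖^2/(2*lam)) ≤ c*‖y (φ k) - x (φ k)‖^2 - (1/lam)*(‖v‖*‖y (φ k) - x (φ k)‖) := by
      have hid : c*‖y (φ k) - x (φ k)‖^2 - (1/lam)*(‖v‖*‖y (φ k) - x (φ k)‖) + ‖v‖^2/(2*lam)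
          = (‖y (φ k) - x (φ k)‖ - ‖v‖)^2 / (2*lam) := by
        rw [hcdef]; field_simp; ring
      have hnn := div_nonneg (sq_nonneg (‖y (φ k) - x (φ k)‖ - ‖v‖))
        (by positivity : (0:ℝ) ≤ 2*lam)
      linarith [hid ▸ hnn]
    have hm1 : (1/lam) * (-(‖v‖ * ‖y (φ k) - x (φ k)‖)) ≤ (1/lam) * ⟪v, y (φ k) - x (φ k)⟫ :=
      mul_le_mul_of_nonneg_left hb1 hpos.le
    have hm2 : (1/lam) * (-(‖v‖ * R)) ≤ (1/lam) * ⟪v, x (φ k) - y 0⟫ :=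
      mul_le_mul_of_nonneg_left hb2 hpos.le
    show M ≤ a (φ k) + b (φ k)
    simp only [hbdef, hMdef]
    rw [hsplit, mul_add] at hA
    linarith [hA, hkey, hm1, hm2]
  have hlowall : ∀ k, M ≤ En k := fun k =>
    le_trans (hlow k) (hant (hφ.le_apply))
  -- En converges
  have hbdd : BddBelow (Set.range En) := ⟨M, fun r ⟨k, hk⟩ => hk ▸ hlowall k⟩
  have hEconv : Tendsto En atTop (𝓝 (⨅ i, En i)) := tendsto_atTop_ciInf hant hbdd
  have hEshift : Tendsto (fun k => En (k+1)) atTop (𝓝 (⨅ i, En i)) :=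
    hEconv.comp (tendsto_add_atTop_nat 1)
  have hdiff : Tendsto (fun k => En k - En (k+1)) atTop (𝓝 0) := by
    have := hEconv.sub hEshift
    simpa using this
  have hbtend : Tendsto b atTop (𝓝 0) := by
    apply squeeze_zero hb0 (g := fun k => (En k - En (k+1))/δ)
    · intro k
      have := hdec k
      rw [le_div_iff₀ hδpos]
      linarith
    · simpa using hdiff.div_const δ
  -- norm sequence tends to zero
  have hstend : Tendsto (fun k => ‖y k - x k‖) atTop (𝓝 0) := by
    have hbc : Tendsto (fun k => b k / c) atTop (𝓝 0) := by
      simpa using hbtend.div_const c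
    have hsq := (Real.continuous_sqrt.tendsto 0).comp hbc
    rw [Real.sqrt_zero] at hsq
    refine hsq.congr fun k => ?_
    show Real.sqrt (b k / c) = ‖y k - x k‖
    rw [hbdef]
    have : c * ‖y k - x k‖^2 / c = ‖y k - x k‖^2 := by
      field_simp
    rw [this, Real.sqrt_sq (norm_nonneg _)]
  -- ε → 0
  have hεshift : Tendsto (fun k => ε (k+1)) atTop (𝓝 0) := by
    apply squeeze_zero (fun k => (hε (k+1)).le) (g := fun k => ‖y k - x k‖ / (lam*(μ-1)))
    · intro k
      rw [le_div_iff₀ (by nlinarith : (0:ℝ) < lam*(μ-1))]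
      have := hF2 k
      nlinarith
    · simpa using hstend.div_const (lam*(μ-1))
  have hεtend : Tendsto ε atTop (𝓝 0) := by
    rw [← tendsto_add_atTop_iff_nat 1]
    exact hεshift
  -- ‖x k - p k‖ → 0
  have hxptend : Tendsto (fun k => ‖x k - p k‖) atTop (𝓝 0) := by
    apply squeeze_zero (fun k => norm_nonneg _) (g := fun k => ‖y k - x k‖ + lam * ε (k+1))
    · intro k
      have htri : ‖x k - p k‖ ≤ ‖x k - y k‖ + ‖y k - p k‖ := norm_sub_le_norm_sub_add_norm_sub _ _ _
      have hr1 : ‖y k - p k‖ = ‖p k - y k‖ := norm_sub_rev _ _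
      have hr2 : ‖x k - y k‖ = ‖y k - x k‖ := norm_sub_rev _ _
      have h1 : ‖p k - y k‖ ≤ lam * ε (k+1) := herr k
      linarith [hr1 ▸ h1, hr2 ▸ htri]
    · have := hstend.add (hεshift.const_mul lam)
      simpa using this
  -- y (φ k) → xbar
  have hsφ : Tendsto (fun k => ‖y (φ k) - x (φ k)‖) atTop (𝓝 0) :=
    hstend.comp hφ.tendsto_atTop
  have hyx0 : Tendsto (fun k => y (φ k) - x (φ k)) atTop (𝓝 0) :=
    tendsto_zero_iff_norm_tendsto_zero.mpr hsφ
  have hyφ : Tendsto (fun k => y (φ k)) atTop (𝓝 xbar) := by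
    have := hxφ.add hyx0
    rw [add_zero] at this
    refine this.congr fun k => ?_
    abel
  -- minimality
  refine ⟨?_, hxptend, hεtend⟩
  intro y0
  by_cases htop : g y0 = ⊤
  · rw [htop]; exact le_top
  · set ry := (g y0).toReal with hrydef
    have hry : g y0 = (ry : EReal) := (EReal.coe_toReal htop (hnebot y0)).symm
    have hclaim : ∀ r : ℝ, (r : EReal) < g xbar → r ≤ ry := by
      intro r hr
      have hev1 : ∀ᶠ k in atTop, (r:EReal) < g (y (φ k)) :=
        hyφ.eventually (hlsc xbar (r:EReal) hr)
      have hItend : Tendsto (fun k => (1/lam)*⟪x (φ k) - y (φ k), y0 - y (φ k)⟫)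
          atTop (𝓝 0) := by
        have h1 : Tendsto (fun k => x (φ k) - y (φ k)) atTop (𝓝 0) := by
          have := hyx0.neg
          rw [neg_zero] at this
          refine this.congr fun k => ?_
          abel
        have h2 : Tendsto (fun k => y0 - y (φ k)) atTop (𝓝 (y0 - xbar)) :=
          tendsto_const_nhds.sub hyφ
        have h3 : Tendsto (fun k => ⟪x (φ k) - y (φ k), y0 - y (φ k)⟫) atTop
            (𝓝 (⟪(0 : EuclideanSpace ℝ (Fin n)), y0 - xbar⟫)) := h1.inner h2
        rw [inner_zero_left] at h3
        have := h3.const_mul (1/lam)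
        simpa using this
      apply le_of_forall_pos_le_add
      intro η hη
      have hev2 : ∀ᶠ k in atTop,
          -η < (1/lam)*⟪x (φ k) - y (φ k), y0 - y (φ k)⟫ :=
        hItend.eventually (eventually_gt_nhds (by linarith : -η < (0:ℝ)))
      obtain ⟨k, hk1, hk2⟩ := (hev1.and hev2).exists
      have hA : a (φ k) + (1/lam)*⟪x (φ k) - y (φ k), y0 - y (φ k)⟫ ≤ ry :=
        aux_subgrad' g hproper hnebot hconv lam hlam prox hprox (x (φ k)) y0 ry hry
      have hra : r < a (φ k) := by
        rw [hfin (φ k)] at hk1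
        exact_mod_cast hk1
      linarith
    by_contra hlt
    push_neg at hlt
    rw [hry] at hlt
    obtain ⟨r, hr1, hr2⟩ := EReal.lt_iff_exists_real_btwn.mp hlt
    have := hclaim r hr2
    have : (ry:EReal) < (r:EReal) := hr1
    rw [EReal.coe_lt_coe_iff] at this
    linarith [hclaim r hr2]
end
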